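/- arXiv:1406.5295 — 10 statements merged into one kernel-verified Lean document; each statement's English description precedes it below -/
import Mathlib

section
/- Suppose β_LS ∈ ℝ^p satisfies the normal equations Xᵀ(y − Xβ_LS) = 0 (y need not equal Xβ_LS, i.e., the system may be inconsistent). If X_j ≠ 0 and β' = β + (X_jᵀ(y − Xβ)/‖X_j‖²) e_j is the coordinate descent update of β on coordinate j, then the Pythagoras identity in fitted-value space ‖Xβ' − Xβ_LS‖² = ‖Xβ − Xβ_LS‖² − ‖Xβ' − Xβ‖² holds. -/
open Matrix BigOperators

/-- If `β_LS` satisfies the normal equations `Xᵀ(y − Xβ_LS) = 0`, then the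
coordinate descent update on a nonzero column `j` satisfies the Pythagoras identity in
fitted-value space: `‖Xβ' − Xβ_LS‖² = ‖Xβ − Xβ_LS‖² − ‖Xβ' − Xβ‖²`. -/
theorem rcd_pythagoras_fitted {n p : ℕ}
    (X : Matrix (Fin n) (Fin p) ℝ) (y : Fin n → ℝ)
    (βLS : Fin p → ℝ) (hLS : Xᵀ.mulVec (y - X.mulVec βLS) = 0)
    (j : Fin p) (hj : (fun i => X i j) ≠ 0) (β β' : Fin p → ℝ)
    (hβ' : β' = β + ((∑ i, X i j * (y i - X.mulVec β i)) / ∑ i, (X i j) ^ 2) •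
      (Pi.single j 1 : Fin p → ℝ)) :
    ∑ i, (X.mulVec β' i - X.mulVec βLS i) ^ 2
      = ∑ i, (X.mulVec β i - X.mulVec βLS i) ^ 2
        - ∑ i, (X.mulVec β' i - X.mulVec β i) ^ 2 := by
  classical
  set c : ℝ := (∑ i, X i j * (y i - X.mulVec β i)) / ∑ i, (X i j) ^ 2 with hc
  have hS : (0:ℝ) < ∑ i, (X i j) ^ 2 := by
    have hex : ∃ i, X i j ≠ 0 := by
      by_contra h
      push_neg at h
      exact hj (funext fun i => h i)
    obtain ⟨i0, hi0⟩ := hex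
    exact Finset.sum_pos' (fun i _ => sq_nonneg _)
      ⟨i0, Finset.mem_univ _, by positivity⟩
  have hcS : c * ∑ i, (X i j) ^ 2 = ∑ i, X i j * (y i - X.mulVec β i) := by
    rw [hc, div_mul_cancel₀ _ (ne_of_gt hS)]
  have hnorm : ∑ i, X i j * (y i - X.mulVec βLS i) = 0 := by
    have := congrFun hLS j
    simpa [Matrix.mulVec, dotProduct, Matrix.transpose_apply] using this
  have hmv : ∀ i, X.mulVec β' i = X.mulVec β i + c * X i j := by
    intro i
    rw [hβ']
    simp only [Matrix.mulVec, dotProduct, Pi.add_apply, Pi.smul_apply,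
      smul_eq_mul, mul_add, Finset.sum_add_distrib]
    congr 1
    rw [Finset.sum_eq_single j]
    · simp [mul_comm]
    · intro k _ hk
      simp [Pi.single_apply, hk]
    · simp
  have key : ∑ i, X i j * (X.mulVec β i - X.mulVec βLS i)
      = -(c * ∑ i, (X i j) ^ 2) := by
    rw [hcS]
    have : ∑ i, X i j * (X.mulVec β i - X.mulVec βLS i)
        = ∑ i, (X i j * (y i - X.mulVec βLS i) - X i j * (y i - X.mulVec β i)) :=
      Finset.sum_congr rfl fun i _ => by ring
    rw [this, Finset.sum_sub_distrib, hnorm, zero_sub]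
  have e1 : ∑ i, (X.mulVec β' i - X.mulVec βLS i) ^ 2
      = ∑ i, (X.mulVec β i - X.mulVec βLS i) ^ 2
        + 2 * c * (∑ i, X i j * (X.mulVec β i - X.mulVec βLS i))
        + c ^ 2 * ∑ i, (X i j) ^ 2 := by
    simp only [hmv]
    rw [Finset.mul_sum, Finset.mul_sum, ← Finset.sum_add_distrib,
      ← Finset.sum_add_distrib]
    exact Finset.sum_congr rfl fun i _ => by ring
  have e2 : ∑ i, (X.mulVec β' i - X.mulVec β i) ^ 2
      = c ^ 2 * ∑ i, (X i j) ^ 2 := by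
    simp only [hmv]
    rw [Finset.mul_sum]
    exact Finset.sum_congr rfl fun i _ => by ring
  rw [e1, e2, key]
  ring
end

section
/- Suppose every row of X is nonzero and β* ∈ ℝ^p satisfies Xβ* = y. For any β ∈ ℝ^p, the expected squared error after one Randomized Kaczmarz step, in which row i is chosen with probability ‖X^i‖²/‖X‖_F², satisfies Σ_{i=1}^n (‖X^i‖²/‖X‖_F²) ‖RK_i(β) − β*‖² ≤ (1 − λ_min(XᵀX)/‖X‖_F²) ‖β − β*‖², where λ_min(XᵀX) denotes the smallest eigenvalue of XᵀX. -/
open Matrix BigOperators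

/-- The Kaczmarz update of `β` on row `i`: `RK_i(β) = β + ((y^i − X^i·β)/‖X^i‖²) X^i`. -/
noncomputable def RK {n p : ℕ} (X : Matrix (Fin n) (Fin p) ℝ) (y : Fin n → ℝ)
    (i : Fin n) (β : Fin p → ℝ) : Fin p → ℝ :=
  β + ((y i - ∑ k, X i k * β k) / ∑ k, (X i k) ^ 2) • X i

lemma rayleigh_low {p : ℕ} (A : Matrix (Fin p) (Fin p) ℝ) (hA : A.IsHermitian)
    (e : Fin p → ℝ) :
    (⨅ j, hA.eigenvalues j) * (e ⬝ᵥ e) ≤ e ⬝ᵥ (A *ᵥ e) := by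
  rcases Nat.eq_zero_or_pos p with hp | hp
  · subst hp
    simp [dotProduct, mulVec, iInf_of_isEmpty, Real.sInf_empty]
  have : Nonempty (Fin p) := Fin.pos_iff_nonempty.mp hp
  set U : Matrix (Fin p) (Fin p) ℝ := (hA.eigenvectorUnitary : Matrix (Fin p) (Fin p) ℝ) with hU
  set c : Fin p → ℝ := star U *ᵥ e with hc
  have hUU : U * star U = 1 := Unitary.coe_mul_star_self _
  have hdot : e ⬝ᵥ (A *ᵥ e) = ∑ j, hA.eigenvalues j * (c j)^2 := by
    conv_lhs => rw [hA.spectral_theorem, Unitary.conjStarAlgAut_apply]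
    rw [← mulVec_mulVec, ← mulVec_mulVec, dotProduct_mulVec e U, ← mulVec_transpose]
    have hTU : Uᵀ = star U := by
      ext i j; simp [Matrix.star_apply, star, conjTranspose]
    rw [hTU, ← hc]
    simp [dotProduct, diagonal_mulVec_single, mulVec_diagonal, Function.comp]
    ring_nf
    apply Finset.sum_congr rfl
    intro j _
    ring
  have hnorm : e ⬝ᵥ e = ∑ j, (c j)^2 := by
    have : c ⬝ᵥ c = e ⬝ᵥ e := by
      rw [hc, dotProduct_mulVec, ← mulVec_transpose]
      have hTU : (star U)ᵀ = U := by
        ext i j; simp [Matrix.star_apply, star, conjTranspose]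
      rw [hTU, mulVec_mulVec, hUU, one_mulVec]
    rw [← this]
    simp [dotProduct, sq]
  rw [hdot, hnorm, Finset.mul_sum]
  apply Finset.sum_le_sum
  intro j _
  have h1 : (⨅ j, hA.eigenvalues j) ≤ hA.eigenvalues j :=
    ciInf_le (Set.Finite.bddBelow (Set.finite_range _)) j
  have h2 : (0:ℝ) ≤ (c j)^2 := sq_nonneg _
  calc (⨅ j, hA.eigenvalues j) * (c j)^2 ≤ hA.eigenvalues j * (c j)^2 := by
        exact mul_le_mul_of_nonneg_right h1 h2

/-- For a consistent system `Xβ* = y` with all rows of `X` nonzero, one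
Randomized Kaczmarz step (row `i` chosen with probability `‖X^i‖²/‖X‖_F²`) contracts the
expected squared error by the factor `1 − λ_min(XᵀX)/‖X‖_F²`. -/
theorem randomized_kaczmarz_one_step {n p : ℕ}
    (X : Matrix (Fin n) (Fin p) ℝ) (y : Fin n → ℝ)
    (hrows : ∀ i, X i ≠ 0)
    (βstar : Fin p → ℝ) (hcons : X.mulVec βstar = y)
    (hA : (Xᵀ * X).IsHermitian) (β : Fin p → ℝ) :
    ∑ i, ((∑ k, (X i k) ^ 2) / ∑ i', ∑ k, (X i' k) ^ 2) *
        ∑ k, (RK X y i β k - βstar k) ^ 2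
      ≤ (1 - (⨅ j, hA.eigenvalues j) / ∑ i', ∑ k, (X i' k) ^ 2) *
        ∑ k, (β k - βstar k) ^ 2 := by
  set e : Fin p → ℝ := fun k => β k - βstar k with he
  set E : ℝ := ∑ k, (β k - βstar k)^2 with hE
  have hEnn : 0 ≤ E := Finset.sum_nonneg fun k _ => sq_nonneg _
  set F : ℝ := ∑ i', ∑ k, (X i' k)^2 with hF
  set lam : ℝ := ⨅ j, hA.eigenvalues j with hlam
  rcases Nat.eq_zero_or_pos n with hn | hn
  · subst hn
    have hF0 : F = 0 := by simp [hF]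
    simp only [Finset.univ_eq_empty, Finset.sum_empty, hF0, div_zero, sub_zero, one_mul]
    exact hEnn
  -- row norms positive
  have hs : ∀ i, 0 < ∑ k, (X i k)^2 := by
    intro i
    obtain ⟨k, hk⟩ := Function.ne_iff.mp (hrows i)
    exact Finset.sum_pos' (fun k _ => sq_nonneg _)
      ⟨k, Finset.mem_univ k, pow_two_pos_of_ne_zero hk⟩
  have : Nonempty (Fin n) := Fin.pos_iff_nonempty.mp hn
  have hFpos : 0 < F := Finset.sum_pos (fun i _ => hs i) Finset.univ_nonempty
  set d : Fin n → ℝ := fun i => ∑ k, X i k * e k with hd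
  -- per-row identity
  have key : ∀ i, ∑ k, (RK X y i β k - βstar k)^2 = E - (d i)^2 / (∑ k, (X i k)^2) := by
    intro i
    have hy : y i = ∑ k, X i k * βstar k := by
      rw [← hcons]; simp [mulVec, dotProduct]
    have hyd : y i - ∑ k, X i k * β k = -(d i) := by
      rw [hy, hd]
      simp only [he]
      rw [← Finset.sum_neg_distrib, ← Finset.sum_sub_distrib]
      exact Finset.sum_congr rfl fun k _ => by ring
    have hrk : ∀ k, RK X y i β k - βstar k = e k + (-(d i) / ∑ k, (X i k)^2) * X i k := by
      intro k
      simp only [RK, Pi.add_apply, Pi.smul_apply, smul_eq_mul, hyd, he]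
      ring
    simp_rw [hrk]
    have expand : ∀ k, (e k + (-(d i) / ∑ k, (X i k)^2) * X i k)^2
        = e k^2 + (2 * (-(d i) / ∑ k, (X i k)^2)) * (X i k * e k)
          + (-(d i) / ∑ k, (X i k)^2)^2 * (X i k)^2 := fun k => by ring
    simp_rw [expand]
    rw [Finset.sum_add_distrib, Finset.sum_add_distrib, ← Finset.mul_sum, ← Finset.mul_sum]
    have hE' : ∑ k, e k^2 = E := Finset.sum_congr rfl fun k _ => rfl
    have hdi : ∑ k, X i k * e k = d i := rfl
    rw [hE', hdi]
    have hsne : (∑ k, (X i k)^2) ≠ 0 := (hs i).ne'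
    field_simp
    ring
  simp_rw [key]
  -- LHS = E - (∑ d²)/F
  have hLHS : ∑ i, ((∑ k, (X i k)^2) / F) * (E - (d i)^2 / (∑ k, (X i k)^2))
      = E - (∑ i, (d i)^2) / F := by
    have : ∀ i, ((∑ k, (X i k)^2) / F) * (E - (d i)^2 / (∑ k, (X i k)^2))
        = (∑ k, (X i k)^2) * E / F - (d i)^2 / F := by
      intro i
      have hsne : (∑ k, (X i k)^2) ≠ 0 := (hs i).ne'
      field_simp
    simp_rw [this]
    rw [Finset.sum_sub_distrib, ← Finset.sum_div, ← Finset.sum_div, ← Finset.sum_mul, ← hF]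
    field_simp
  rw [hLHS]
  -- Rayleigh bound
  have hray : lam * E ≤ ∑ i, (d i)^2 := by
    have h1 := rayleigh_low (Xᵀ * X) hA e
    have h2 : e ⬝ᵥ e = E := by
      simp [dotProduct, hE, he, sq]
    have h3 : e ⬝ᵥ ((Xᵀ * X) *ᵥ e) = ∑ i, (d i)^2 := by
      rw [← mulVec_mulVec, dotProduct_mulVec, vecMul_transpose]
      simp [dotProduct, mulVec, hd, sq, mul_comm]
    rw [h2, h3] at h1
    exact h1
  have hdiv : lam * E / F ≤ (∑ i, (d i)^2) / F :=
    div_le_div_of_nonneg_right hray hFpos.le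
  rw [sub_mul, one_mul, div_mul_eq_mul_div]
  linarith [hdiv]
end

section
/- Suppose every row of X is nonzero and β* ∈ ℝ^p satisfies Xβ* = y. Fix β_0 ∈ ℝ^p and t ≥ 0. For an index sequence ω ∈ {1,…,n}^t, let β_t(ω) be the result of applying Kaczmarz updates successively on rows ω_1, …, ω_t starting from β_0, and let P(ω) = ∏_{k=1}^t ‖X^{ω_k}‖²/‖X‖_F². Then Σ_ω P(ω) ‖β_t(ω) − β*‖² ≤ (1 − λ_min(XᵀX)/‖X‖_F²)^t ‖β_0 − β*‖²; i.e., Randomized Kaczmarz converges linearly in expectation to the consistent solution. -/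
open Matrix BigOperators

/-- The result of applying Kaczmarz updates successively on rows `ω 1, …, ω t`,
starting from `β0`. -/
noncomputable def iterRK {n p : ℕ} (X : Matrix (Fin n) (Fin p) ℝ) (y : Fin n → ℝ)
    (β0 : Fin p → ℝ) (t : ℕ) (ω : Fin t → Fin n) : Fin p → ℝ :=
  (List.ofFn ω).foldl (fun β i => RK X y i β) β0

section aux
variable {n p : ℕ} (X : Matrix (Fin n) (Fin p) ℝ)

lemma quadform_eq (v : Fin p → ℝ) :
    v ⬝ᵥ ((Xᵀ * X) *ᵥ v) = ∑ i, (∑ j, X i j * v j) ^ 2 := by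
  rw [← mulVec_mulVec, dotProduct_mulVec, vecMul_transpose]
  simp [dotProduct, mulVec, sq]

lemma rayleigh_min (hA : (Xᵀ * X).IsHermitian) (v : Fin p → ℝ) :
    (⨅ j, hA.eigenvalues j) * ∑ k, v k ^ 2 ≤ ∑ i, (∑ j, X i j * v j) ^ 2 := by
  rcases isEmpty_or_nonempty (Fin p) with hp | hp
  · simp
  set U : Matrix (Fin p) (Fin p) ℝ := (hA.eigenvectorUnitary : Matrix (Fin p) (Fin p) ℝ) with hU
  have hquadA : Xᵀ * X = U * diagonal (RCLike.ofReal ∘ hA.eigenvalues) * star U := hA.spectral_theorem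
  have hUU : U * star U = 1 := (Matrix.mem_unitaryGroup_iff).mp hA.eigenvectorUnitary.2
  have hstarU : star U = Uᵀ := by
    rw [Matrix.star_eq_conjTranspose, conjTranspose_eq_transpose_of_trivial]
  set w : Fin p → ℝ := star U *ᵥ v with hw
  have hquad : v ⬝ᵥ ((Xᵀ * X) *ᵥ v) = ∑ j, hA.eigenvalues j * (w j) ^ 2 := by
    conv_lhs => rw [hquadA]
    rw [← mulVec_mulVec, ← mulVec_mulVec, dotProduct_mulVec]
    have : v ᵥ* U = star U *ᵥ v := by rw [hstarU, ← vecMul_transpose, transpose_transpose]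
    rw [this, ← hw]
    simp [mulVec_diagonal, dotProduct, sq, Function.comp]
    ring_nf
    rw [Finset.sum_congr rfl]
    intro j _
    ring
  have hnorm : v ⬝ᵥ v = ∑ j, (w j) ^ 2 := by
    have h1 : w ⬝ᵥ w = v ⬝ᵥ v := by
      rw [hw, dotProduct_mulVec, hstarU, vecMul_transpose, mulVec_mulVec, ← hstarU, hUU,
        one_mulVec]
    rw [← h1]
    simp [dotProduct, sq]
  have hvv : ∑ k, v k ^ 2 = v ⬝ᵥ v := by simp [dotProduct, sq]
  rw [hvv, hnorm, Finset.mul_sum, ← quadform_eq X v, hquad]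
  refine Finset.sum_le_sum fun j _ => ?_
  exact mul_le_mul_of_nonneg_right (ciInf_le (Finite.bddBelow_range _) j) (sq_nonneg _)

lemma eig_nonneg (hA : (Xᵀ * X).IsHermitian) (j : Fin p) : 0 ≤ hA.eigenvalues j := by
  have hPSD : (Xᵀ * X).PosSemidef := by
    rw [← conjTranspose_eq_transpose_of_trivial]
    exact posSemidef_conjTranspose_mul_self X
  exact hPSD.eigenvalues_nonneg j

lemma lam_nonneg (hA : (Xᵀ * X).IsHermitian) : 0 ≤ ⨅ j, hA.eigenvalues j :=
  Real.iInf_nonneg (eig_nonneg X hA)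

lemma lam_le_F (hA : (Xᵀ * X).IsHermitian) :
    (⨅ j, hA.eigenvalues j) ≤ ∑ i, ∑ j, (X i j) ^ 2 := by
  rcases isEmpty_or_nonempty (Fin p) with hp | hp
  · rw [Real.iInf_of_isEmpty]
    positivity
  obtain ⟨j₀⟩ := hp
  refine le_trans (ciInf_le (Finite.bddBelow_range _) j₀) ?_
  set u : Fin p → ℝ := ⇑(hA.eigenvectorBasis j₀) with hu
  have hnu : ∑ k, u k ^ 2 = 1 := by
    have h := orthonormal_iff_ite.mp hA.eigenvectorBasis.orthonormal j₀ j₀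
    rw [EuclideanSpace.inner_eq_star_dotProduct] at h
    simpa [dotProduct, sq] using h
  have heig : hA.eigenvalues j₀ = ∑ i, (∑ j, X i j * u j) ^ 2 := by
    have h := hA.eigenvalues_eq j₀
    rw [← quadform_eq X u]
    simpa [dotProduct] using h
  rw [heig]
  calc ∑ i, (∑ j, X i j * u j) ^ 2
      ≤ ∑ i, (∑ j, (X i j) ^ 2) * ∑ j, u j ^ 2 :=
        Finset.sum_le_sum fun i _ => Finset.sum_mul_sq_le_sq_mul_sq _ _ _
    _ = ∑ i, ∑ j, (X i j) ^ 2 := by simp [hnu]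

variable (y : Fin n → ℝ)

lemma one_step (hrows : ∀ i, X i ≠ 0) (βstar : Fin p → ℝ) (hcons : X.mulVec βstar = y)
    (hA : (Xᵀ * X).IsHermitian) (β : Fin p → ℝ) :
    ∑ i, ((∑ j, (X i j) ^ 2) / ∑ i, ∑ j, (X i j) ^ 2) * ∑ k, (RK X y i β k - βstar k) ^ 2
      ≤ (1 - (⨅ j, hA.eigenvalues j) / ∑ i, ∑ j, (X i j) ^ 2) * ∑ k, (β k - βstar k) ^ 2 := by
  rcases isEmpty_or_nonempty (Fin n) with hn | hn
  · simp only [Finset.univ_eq_empty, Finset.sum_empty, div_zero, sub_zero, one_mul]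
    positivity
  set F := ∑ i, ∑ j, (X i j) ^ 2 with hF
  have hs : ∀ i, 0 < ∑ j, (X i j) ^ 2 := by
    intro i
    obtain ⟨j, hj⟩ := Function.ne_iff.mp (hrows i)
    exact Finset.sum_pos' (fun j _ => sq_nonneg _) ⟨j, Finset.mem_univ j, pow_two_pos_of_ne_zero hj⟩
  have hFpos : 0 < F := Finset.sum_pos (fun i _ => hs i) Finset.univ_nonempty
  have hFne : F ≠ 0 := ne_of_gt hFpos
  have hy : ∀ i, y i = ∑ j, X i j * βstar j := by
    intro i
    rw [← hcons]
    simp [mulVec, dotProduct]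
  have hstep : ∀ i, ∑ k, (RK X y i β k - βstar k) ^ 2
      = (∑ k, (β k - βstar k) ^ 2)
        - (∑ j, X i j * (β j - βstar j)) ^ 2 / (∑ j, (X i j) ^ 2) := by
    intro i
    have hsne : (∑ j, (X i j) ^ 2) ≠ 0 := ne_of_gt (hs i)
    set s := ∑ j, (X i j) ^ 2 with hsdef
    set r := ∑ j, X i j * (β j - βstar j) with hr
    have hci : y i - ∑ k, X i k * β k = -r := by
      rw [hy i, hr, ← Finset.sum_sub_distrib, ← Finset.sum_neg_distrib]
      exact Finset.sum_congr rfl fun j _ => by ring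
    have expand : ∑ k, (RK X y i β k - βstar k) ^ 2
        = (∑ k, (β k - βstar k) ^ 2) + (2 * (-r / s)) * r + (-r / s) ^ 2 * s := by
      simp only [RK, Pi.add_apply, Pi.smul_apply, smul_eq_mul, hci, ← hsdef]
      rw [Finset.sum_congr rfl (fun k _ =>
        show (β k + -r / s * X i k - βstar k) ^ 2
          = (β k - βstar k) ^ 2 + (2 * (-r / s)) * (X i k * (β k - βstar k))
            + (-r / s) ^ 2 * (X i k) ^ 2 from by ring)]
      rw [Finset.sum_add_distrib, Finset.sum_add_distrib, ← Finset.mul_sum, ← Finset.mul_sum,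
        ← hr]
    rw [expand]
    field_simp
    ring
  have lhs_eq : ∑ i, ((∑ j, (X i j) ^ 2) / F) * ∑ k, (RK X y i β k - βstar k) ^ 2
      = (∑ k, (β k - βstar k) ^ 2)
        - (∑ i, (∑ j, X i j * (β j - βstar j)) ^ 2) / F := by
    calc ∑ i, ((∑ j, (X i j) ^ 2) / F) * ∑ k, (RK X y i β k - βstar k) ^ 2
        = ∑ i, ((∑ j, (X i j) ^ 2) * (∑ k, (β k - βstar k) ^ 2) / F
            - (∑ j, X i j * (β j - βstar j)) ^ 2 / F) := by
          refine Finset.sum_congr rfl fun i _ => ?_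
          rw [hstep i]
          have hsne : (∑ j, (X i j) ^ 2) ≠ 0 := ne_of_gt (hs i)
          field_simp
      _ = (∑ i, (∑ j, (X i j) ^ 2)) * (∑ k, (β k - βstar k) ^ 2) / F
            - (∑ i, (∑ j, X i j * (β j - βstar j)) ^ 2) / F := by
          rw [Finset.sum_sub_distrib, ← Finset.sum_div, ← Finset.sum_div, ← Finset.sum_mul]
      _ = (∑ k, (β k - βstar k) ^ 2)
            - (∑ i, (∑ j, X i j * (β j - βstar j)) ^ 2) / F := by
          rw [← hF, mul_comm, mul_div_assoc, div_self hFne, mul_one]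
  rw [lhs_eq, sub_mul, one_mul]
  refine sub_le_sub_left ?_ _
  rw [div_mul_eq_mul_div]
  rw [div_le_div_iff_of_pos_right hFpos]
  exact rayleigh_min X hA _

end aux

/-- For a consistent system `Xβ* = y` with all rows of `X` nonzero,
Randomized Kaczmarz converges linearly in expectation:
`E‖β_t − β*‖² ≤ (1 − λ_min(XᵀX)/‖X‖_F²)^t ‖β_0 − β*‖²`, where the expectation is over
index sequences `ω` with probability `P(ω) = ∏_k ‖X^{ω_k}‖²/‖X‖_F²`. -/
theorem randomized_kaczmarz_linear_convergence {n p : ℕ}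
    (X : Matrix (Fin n) (Fin p) ℝ) (y : Fin n → ℝ)
    (hrows : ∀ i, X i ≠ 0)
    (βstar : Fin p → ℝ) (hcons : X.mulVec βstar = y)
    (hA : (Xᵀ * X).IsHermitian) (β0 : Fin p → ℝ) (t : ℕ) :
    ∑ ω : Fin t → Fin n,
        (∏ k, (∑ j, (X (ω k) j) ^ 2) / ∑ i, ∑ j, (X i j) ^ 2) *
          ∑ k, (iterRK X y β0 t ω k - βstar k) ^ 2
      ≤ (1 - (⨅ j, hA.eigenvalues j) / ∑ i, ∑ j, (X i j) ^ 2) ^ t *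
        ∑ k, (β0 k - βstar k) ^ 2 := by
  set F := ∑ i, ∑ j, (X i j) ^ 2 with hF
  set C := 1 - (⨅ j, hA.eigenvalues j) / F with hC
  have hFnn : 0 ≤ F := by positivity
  have hC0 : 0 ≤ C := by
    rcases eq_or_lt_of_le hFnn with h | h
    · rw [hC, ← h, div_zero]; norm_num
    · rw [hC, sub_nonneg]
      exact (div_le_one h).mpr (lam_le_F X hA)
  induction t generalizing β0 with
  | zero =>
      simp [iterRK]
  | succ t ih =>
      have hsum := Fintype.sum_prod_type
        (f := fun (q : Fin n × (Fin t → Fin n)) =>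
          (∏ k, (∑ j, (X ((Fin.consEquiv (fun _ : Fin (t+1) => Fin n)) q k) j) ^ 2) / F) *
            ∑ k, (iterRK X y β0 (t+1) ((Fin.consEquiv (fun _ : Fin (t+1) => Fin n)) q) k - βstar k) ^ 2)
      rw [← Equiv.sum_comp (Fin.consEquiv (fun _ : Fin (t+1) => Fin n))]
      rw [hsum]
      have hcons' : ∀ (i : Fin n) (ρ : Fin t → Fin n),
          (Fin.consEquiv (fun _ : Fin (t+1) => Fin n)) (i, ρ) = Fin.cons i ρ := by
        intro i ρ; rfl
      have hiter : ∀ (i : Fin n) (ρ : Fin t → Fin n),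
          iterRK X y β0 (t+1) (Fin.cons i ρ) = iterRK X y (RK X y i β0) t ρ := by
        intro i ρ
        simp [iterRK, List.ofFn_succ, Fin.cons_succ, Fin.cons_zero]
      have hprod : ∀ (i : Fin n) (ρ : Fin t → Fin n),
          (∏ k : Fin (t+1), (∑ j, (X ((Fin.cons i ρ : Fin (t+1) → Fin n) k) j) ^ 2) / F)
            = ((∑ j, (X i j) ^ 2) / F) * ∏ k : Fin t, (∑ j, (X (ρ k) j) ^ 2) / F := by
        intro i ρ
        rw [Fin.prod_univ_succ]
        simp [Fin.cons_succ, Fin.cons_zero]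
      calc ∑ i : Fin n, ∑ ρ : Fin t → Fin n,
            (∏ k, (∑ j, (X ((Fin.consEquiv (fun _ : Fin (t+1) => Fin n)) (i, ρ) k) j) ^ 2) / F) *
              ∑ k, (iterRK X y β0 (t+1) ((Fin.consEquiv (fun _ : Fin (t+1) => Fin n)) (i, ρ)) k - βstar k) ^ 2
          = ∑ i : Fin n, ((∑ j, (X i j) ^ 2) / F) * ∑ ρ : Fin t → Fin n,
              (∏ k, (∑ j, (X (ρ k) j) ^ 2) / F) *
                ∑ k, (iterRK X y (RK X y i β0) t ρ k - βstar k) ^ 2 := by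
            refine Finset.sum_congr rfl fun i _ => ?_
            rw [Finset.mul_sum]
            refine Finset.sum_congr rfl fun ρ _ => ?_
            rw [hcons', hiter, hprod]
            ring
        _ ≤ ∑ i : Fin n, ((∑ j, (X i j) ^ 2) / F) *
              (C ^ t * ∑ k, (RK X y i β0 k - βstar k) ^ 2) := by
            refine Finset.sum_le_sum fun i _ => ?_
            refine mul_le_mul_of_nonneg_left (ih (RK X y i β0)) ?_
            positivity
        _ = C ^ t * ∑ i : Fin n, ((∑ j, (X i j) ^ 2) / F) *
              ∑ k, (RK X y i β0 k - βstar k) ^ 2 := by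
            rw [Finset.mul_sum]
            exact Finset.sum_congr rfl fun i _ => by ring
        _ ≤ C ^ t * (C * ∑ k, (β0 k - βstar k) ^ 2) := by
            refine mul_le_mul_of_nonneg_left ?_ (pow_nonneg hC0 t)
            exact one_step X y hrows βstar hcons hA β0
        _ = C ^ (t+1) * ∑ k, (β0 k - βstar k) ^ 2 := by ring
end

section
/- Suppose every column of X is nonzero and β_LS ∈ ℝ^p satisfies the normal equations Xᵀ(y − Xβ_LS) = 0. For any β ∈ ℝ^p, the expected squared fitted-value error after one Randomized Coordinate Descent step, in which coordinate j is chosen with probability ‖X_j‖²/‖X‖_F², satisfies Σ_{j=1}^p (‖X_j‖²/‖X‖_F²) ‖X·RCD_j(β) − Xβ_LS‖² ≤ (1 − λ_min(XᵀX)/‖X‖_F²) ‖Xβ − Xβ_LS‖², where λ_min(XᵀX) is the smallest eigenvalue of XᵀX; in particular this holds even when the system Xβ = y is inconsistent. -/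
open Matrix BigOperators

/-- The coordinate descent update of `β` on coordinate `j`:
`RCD_j(β) = β + (X_jᵀ(y − Xβ)/‖X_j‖²) e_j`. -/
noncomputable def RCD {n p : ℕ} (X : Matrix (Fin n) (Fin p) ℝ) (y : Fin n → ℝ)
    (j : Fin p) (β : Fin p → ℝ) : Fin p → ℝ :=
  β + ((∑ i, X i j * (y i - X.mulVec β i)) / ∑ i, (X i j) ^ 2) • (Pi.single j 1 : Fin p → ℝ)

lemma key0 {p : ℕ} {A U : Matrix (Fin p) (Fin p) ℝ} {e : Fin p → ℝ} {μ : ℝ}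
    (hUU : Uᵀ * U = 1) (hD : A = U * diagonal e * Uᵀ)
    (h0 : ∀ k, 0 ≤ e k) (hμ : ∀ k, μ ≤ e k) (v : Fin p → ℝ) :
    μ * (v ⬝ᵥ A *ᵥ v) ≤ (A *ᵥ v) ⬝ᵥ (A *ᵥ v) := by
  set w : Fin p → ℝ := Uᵀ *ᵥ v with hw
  have hAv : A *ᵥ v = U *ᵥ (diagonal e *ᵥ w) := by
    rw [hD, ← mulVec_mulVec, ← mulVec_mulVec]
  have h1 : (A *ᵥ v) ⬝ᵥ (A *ᵥ v) = ∑ k, (e k)^2 * (w k)^2 := by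
    rw [hAv, Matrix.dotProduct_mulVec]
    have h : (U *ᵥ (diagonal e *ᵥ w)) ᵥ* U = (diagonal e *ᵥ w) ᵥ* (Uᵀ * U) := by
      rw [← vecMul_vecMul, ← Matrix.vecMul_transpose]
    rw [h, hUU, vecMul_one]
    simp [dotProduct, Matrix.mulVec_diagonal]
    ring_nf
  have h2 : v ⬝ᵥ A *ᵥ v = ∑ k, e k * (w k)^2 := by
    rw [hD, ← mulVec_mulVec, ← mulVec_mulVec, Matrix.dotProduct_mulVec]
    have h : v ᵥ* U = w := by rw [hw, Matrix.mulVec_transpose]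
    rw [h]
    simp only [dotProduct, Matrix.mulVec_diagonal]
    exact Finset.sum_congr rfl fun x _ => by ring
  rw [h1, h2, Finset.mul_sum]
  apply Finset.sum_le_sum
  intro k _
  have hh : μ * e k ≤ e k * e k := mul_le_mul_of_nonneg_right (hμ k) (h0 k)
  calc μ * (e k * w k ^ 2) = (μ * e k) * w k ^ 2 := by ring
    _ ≤ (e k * e k) * w k ^ 2 := mul_le_mul_of_nonneg_right hh (sq_nonneg _)
    _ = e k ^ 2 * w k ^ 2 := by ring

lemma key {p : ℕ} [NeZero p] {A : Matrix (Fin p) (Fin p) ℝ} (hA : A.IsHermitian)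
    (hpsd : A.PosSemidef) (v : Fin p → ℝ) :
    (⨅ k, hA.eigenvalues k) * (v ⬝ᵥ A *ᵥ v) ≤ (A *ᵥ v) ⬝ᵥ (A *ᵥ v) := by
  have hUU : (hA.eigenvectorUnitary : Matrix (Fin p) (Fin p) ℝ)ᵀ *
      (hA.eigenvectorUnitary : Matrix (Fin p) (Fin p) ℝ) = 1 := by
    have := Unitary.coe_star_mul_self hA.eigenvectorUnitary
    simpa [Matrix.star_eq_conjTranspose] using this
  have hD : A = (hA.eigenvectorUnitary : Matrix (Fin p) (Fin p) ℝ) * diagonal hA.eigenvalues *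
      (hA.eigenvectorUnitary : Matrix (Fin p) (Fin p) ℝ)ᵀ := by
    have := hA.spectral_theorem
    simpa [Matrix.star_eq_conjTranspose] using this
  exact key0 hUU hD (fun k => hpsd.eigenvalues_nonneg k)
    (fun k => ciInf_le (Set.Finite.bddBelow (Set.finite_range _)) k) v


/-- If `β_LS` satisfies the normal equations `Xᵀ(y − Xβ_LS) = 0` and all
columns of `X` are nonzero, one Randomized Coordinate Descent step (coordinate `j`
chosen with probability `‖X_j‖²/‖X‖_F²`) contracts the expected squared fitted-value
error by the factor `1 − λ_min(XᵀX)/‖X‖_F²` — even for an inconsistent system. -/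
theorem randomized_cd_one_step_fitted {n p : ℕ}
    (X : Matrix (Fin n) (Fin p) ℝ) (y : Fin n → ℝ)
    (hcols : ∀ j, (fun i => X i j) ≠ 0)
    (βLS : Fin p → ℝ) (hLS : Xᵀ.mulVec (y - X.mulVec βLS) = 0)
    (hA : (Xᵀ * X).IsHermitian) (β : Fin p → ℝ) :
    ∑ j, ((∑ i, (X i j) ^ 2) / ∑ j', ∑ i, (X i j') ^ 2) *
        ∑ i, (X.mulVec (RCD X y j β) i - X.mulVec βLS i) ^ 2
      ≤ (1 - (⨅ k, hA.eigenvalues k) / ∑ j', ∑ i, (X i j') ^ 2) *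
        ∑ i, (X.mulVec β i - X.mulVec βLS i) ^ 2 := by
  classical
  rcases Nat.eq_zero_or_pos p with hp | hp
  · subst hp
    simp [Matrix.mulVec, dotProduct]
  haveI : NeZero p := ⟨hp.ne'⟩
  set r : Fin n → ℝ := fun i => X.mulVec β i - X.mulVec βLS i with hrdef
  set s : Fin p → ℝ := fun j => ∑ i, X i j * r i with hsdef
  -- positivity of column norms and Frobenius norm
  have hc : ∀ j, 0 < ∑ i, (X i j) ^ 2 := by
    intro j
    have h := hcols j
    rw [Function.ne_iff] at h
    obtain ⟨i, hi⟩ := h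
    have hx : X i j ≠ 0 := by simpa using hi
    refine Finset.sum_pos' (fun i _ => sq_nonneg _) ⟨i, Finset.mem_univ i, by positivity⟩
  have hF : 0 < ∑ j', ∑ i, (X i j') ^ 2 :=
    Finset.sum_pos (fun j _ => hc j) Finset.univ_nonempty
  -- the gradient identity from the normal equations
  have hs_eq : ∀ j, ∑ i, X i j * (y i - X.mulVec β i) = - s j := by
    intro j
    have h0 : ∑ i, X i j * (y i - X.mulVec βLS i) = 0 := by
      have := congrFun hLS j
      simpa [Matrix.mulVec, dotProduct, Matrix.transpose_apply] using this
    calc ∑ i, X i j * (y i - X.mulVec β i)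
        = ∑ i, (X i j * (y i - X.mulVec βLS i) - X i j * r i) :=
          Finset.sum_congr rfl fun i _ => by simp only [hrdef]; ring
      _ = (∑ i, X i j * (y i - X.mulVec βLS i)) - ∑ i, X i j * r i :=
          Finset.sum_sub_distrib _ _
      _ = - s j := by rw [h0, hsdef]; simp
  -- per-coordinate error after one step
  have hterm : ∀ j, (∑ i, (X.mulVec (RCD X y j β) i - X.mulVec βLS i) ^ 2)
      = (∑ i, (r i) ^ 2) - (s j) ^ 2 / (∑ i, (X i j) ^ 2) := by
    intro j
    have hcj := hc j
    have hmv : ∀ i, X.mulVec (RCD X y j β) i - X.mulVec βLS i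
        = r i - (s j / (∑ i', (X i' j) ^ 2)) * X i j := by
      intro i
      show X.mulVec (β + _ • (Pi.single j 1 : Fin p → ℝ)) i - X.mulVec βLS i = _
      rw [Matrix.mulVec_add, Matrix.mulVec_smul, hs_eq j]
      simp only [Pi.add_apply, Pi.smul_apply, smul_eq_mul, Matrix.mulVec_single, MulOpposite.op_one, one_smul, Matrix.col_apply, mul_one, hrdef]
      ring
    have hsj : (∑ i, X i j * r i) = s j := rfl
    calc ∑ i, (X.mulVec (RCD X y j β) i - X.mulVec βLS i) ^ 2
        = ∑ i, (r i - (s j / (∑ i', (X i' j) ^ 2)) * X i j) ^ 2 :=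
          Finset.sum_congr rfl fun i _ => by rw [hmv i]
      _ = (∑ i, (r i) ^ 2) - 2 * (s j / (∑ i', (X i' j) ^ 2)) * (∑ i, X i j * r i)
            + (s j / (∑ i', (X i' j) ^ 2)) ^ 2 * (∑ i, (X i j) ^ 2) := by
          rw [Finset.mul_sum, Finset.mul_sum, ← Finset.sum_sub_distrib, ← Finset.sum_add_distrib]
          exact Finset.sum_congr rfl fun i _ => by ring
      _ = (∑ i, (r i) ^ 2) - (s j) ^ 2 / (∑ i, (X i j) ^ 2) := by
          rw [hsj]
          field_simp
          ring
  -- expected error after one step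
  have hLHS : ∑ j, ((∑ i, (X i j) ^ 2) / ∑ j', ∑ i, (X i j') ^ 2) *
        ∑ i, (X.mulVec (RCD X y j β) i - X.mulVec βLS i) ^ 2
      = (∑ i, (r i) ^ 2) - (∑ j, (s j) ^ 2) / (∑ j', ∑ i, (X i j') ^ 2) := by
    calc ∑ j, ((∑ i, (X i j) ^ 2) / ∑ j', ∑ i, (X i j') ^ 2) *
          ∑ i, (X.mulVec (RCD X y j β) i - X.mulVec βLS i) ^ 2
        = ∑ j, ((∑ i, (X i j) ^ 2) * (∑ i, (r i) ^ 2) / (∑ j', ∑ i, (X i j') ^ 2)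
            - (s j) ^ 2 / (∑ j', ∑ i, (X i j') ^ 2)) := by
          refine Finset.sum_congr rfl fun j _ => ?_
          rw [hterm j]
          have h1 := (hc j).ne'
          have h2 := hF.ne'
          field_simp
      _ = (∑ j, (∑ i, (X i j) ^ 2)) * (∑ i, (r i) ^ 2) / (∑ j', ∑ i, (X i j') ^ 2)
            - (∑ j, (s j) ^ 2) / (∑ j', ∑ i, (X i j') ^ 2) := by
          rw [Finset.sum_sub_distrib, ← Finset.sum_div, ← Finset.sum_div, ← Finset.sum_mul]
      _ = (∑ i, (r i) ^ 2) - (∑ j, (s j) ^ 2) / (∑ j', ∑ i, (X i j') ^ 2) := by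
          rw [mul_comm, mul_div_assoc, div_self hF.ne', mul_one]
  -- matrix forms
  have hr_eq : r = X *ᵥ (β - βLS) := by
    funext i
    simp [hrdef, Matrix.mulVec_sub]
  have hs_mat : s = (Xᵀ * X) *ᵥ (β - βLS) := by
    have h1 : s = Xᵀ *ᵥ r := by
      funext j
      simp [hsdef, Matrix.mulVec, dotProduct]
    rw [h1, hr_eq, mulVec_mulVec]
  have hR_eq : ∑ i, (r i) ^ 2 = (β - βLS) ⬝ᵥ (Xᵀ * X) *ᵥ (β - βLS) := by
    rw [← mulVec_mulVec, Matrix.dotProduct_mulVec, Matrix.vecMul_transpose, ← hr_eq]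
    simp [dotProduct, sq]
  have hS_eq : ∑ j, (s j) ^ 2 = ((Xᵀ * X) *ᵥ (β - βLS)) ⬝ᵥ ((Xᵀ * X) *ᵥ (β - βLS)) := by
    rw [← hs_mat]
    simp [dotProduct, sq]
  have hpsd : (Xᵀ * X).PosSemidef := by
    have := Matrix.posSemidef_conjTranspose_mul_self X
    simpa [Matrix.conjTranspose_eq_transpose_of_trivial] using this
  have hkey : (⨅ k, hA.eigenvalues k) * (∑ i, (r i) ^ 2) ≤ ∑ j, (s j) ^ 2 := by
    rw [hR_eq, hS_eq]
    exact key hA hpsd (β - βLS)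
  -- conclude
  have hRr : ∑ i, (X.mulVec β i - X.mulVec βLS i) ^ 2 = ∑ i, (r i) ^ 2 := rfl
  rw [hLHS, hRr]
  have hdiv : (⨅ k, hA.eigenvalues k) * (∑ i, (r i) ^ 2) / (∑ j', ∑ i, (X i j') ^ 2)
      ≤ (∑ j, (s j) ^ 2) / (∑ j', ∑ i, (X i j') ^ 2) := by gcongr
  have hring : (1 - (⨅ k, hA.eigenvalues k) / ∑ j', ∑ i, (X i j') ^ 2) * (∑ i, (r i) ^ 2)
      = (∑ i, (r i) ^ 2)
        - (⨅ k, hA.eigenvalues k) * (∑ i, (r i) ^ 2) / (∑ j', ∑ i, (X i j') ^ 2) := by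
    ring
  linarith
end

section
/- Suppose X has full column rank (so λ_min(XᵀX) > 0), every column of X is nonzero, and β_LS = (XᵀX)⁻¹Xᵀy. With β_t(ω) and P(ω) as in the Randomized Coordinate Descent iteration, Σ_ω P(ω) ‖β_t(ω) − β_LS‖² ≤ (λ_max(XᵀX)/λ_min(XᵀX)) (1 − λ_min(XᵀX)/‖X‖_F²)^t ‖β_0 − β_LS‖²; i.e., since XᵀX is invertible, linear convergence of the fitted values implies linear convergence in expectation of the RCD iterates themselves to the least-squares solution. -/
open Matrix BigOperators

lemma sq_sum_dot {p : ℕ} (v : Fin p → ℝ) : ∑ k, (v k)^2 = v ⬝ᵥ v := by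
  simp [dotProduct, sq]

lemma quad_repr {p : ℕ} {M : Matrix (Fin p) (Fin p) ℝ} (hM : M.IsHermitian) (v : Fin p → ℝ) :
    ∃ w : Fin p → ℝ, (∑ k, (w k)^2 = ∑ k, (v k)^2) ∧
      (v ⬝ᵥ M *ᵥ v = ∑ k, hM.eigenvalues k * (w k)^2) ∧
      (∑ k, ((M *ᵥ v) k)^2 = ∑ k, (hM.eigenvalues k)^2 * (w k)^2) := by
  set U : Matrix (Fin p) (Fin p) ℝ := (hM.eigenvectorUnitary : Matrix (Fin p) (Fin p) ℝ) with hUdef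
  have hU1 : U * star U = 1 := mem_unitaryGroup_iff.mp hM.eigenvectorUnitary.2
  have hU2 : star U * U = 1 := mem_unitaryGroup_iff'.mp hM.eigenvectorUnitary.2
  have hstar : star U = Uᵀ := by
    rw [star_eq_conjTranspose, conjTranspose]
    congr 1
  have hspec : M = U * diagonal (RCLike.ofReal ∘ hM.eigenvalues) * star U := hM.spectral_theorem
  have hdiag : (diagonal (RCLike.ofReal ∘ hM.eigenvalues) : Matrix (Fin p) (Fin p) ℝ)
      = diagonal hM.eigenvalues := by
    congr 1
  set μ := hM.eigenvalues
  set w : Fin p → ℝ := Uᵀ *ᵥ v with hw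
  have hwv : w = v ᵥ* U := by rw [hw, mulVec_transpose]
  -- norm of U *ᵥ z equals norm of z
  have hUz : ∀ z : Fin p → ℝ, (U *ᵥ z) ⬝ᵥ (U *ᵥ z) = z ⬝ᵥ z := by
    intro z
    rw [dotProduct_mulVec, ← mulVec_transpose, mulVec_mulVec, ← hstar, hU2, one_mulVec]
  have hMv : M *ᵥ v = U *ᵥ (fun k => μ k * w k) := by
    have hd : diagonal μ *ᵥ w = fun k => μ k * w k := by
      funext k; rw [mulVec_diagonal]
    rw [hspec, hdiag, hstar, ← mulVec_mulVec, ← mulVec_mulVec, ← hw, hd]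
  refine ⟨w, ?_, ?_, ?_⟩
  · -- ∑ w² = ∑ v²
    have hvU : v = U *ᵥ w := by
      rw [hw, mulVec_mulVec, ← hstar, hU1, one_mulVec]
    rw [sq_sum_dot, sq_sum_dot, hvU, hUz]
  · rw [hMv, dotProduct_mulVec, ← mulVec_transpose, ← hw]
    simp only [dotProduct]
    exact Finset.sum_congr rfl fun x _ => by ring
  · rw [hMv, sq_sum_dot, hUz]
    simp only [dotProduct]
    exact Finset.sum_congr rfl fun x _ => by ring

lemma normXr {n p : ℕ} (X : Matrix (Fin n) (Fin p) ℝ) (r : Fin p → ℝ) :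
    ∑ i, ((X *ᵥ r) i)^2 = r ⬝ᵥ (Xᵀ * X) *ᵥ r := by
  rw [sq_sum_dot]
  conv_rhs => rw [← mulVec_mulVec, dotProduct_mulVec, vecMul_transpose]

lemma rcd_step {n p : ℕ} (X : Matrix (Fin n) (Fin p) ℝ) (y : Fin n → ℝ) (βLS : Fin p → ℝ)
    (hres : Xᵀ *ᵥ (y - X *ᵥ βLS) = 0)
    (hcols : ∀ j, 0 < ∑ i, (X i j)^2)
    (hA : (Xᵀ * X).IsHermitian)
    (lmin : ℝ) (hlmin : 0 < lmin) (hle : ∀ k, lmin ≤ hA.eigenvalues k)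
    (F : ℝ) (hF : F = ∑ j, ∑ i, (X i j)^2) (hFpos : 0 < F)
    (β : Fin p → ℝ) :
    ∑ j, ((∑ i, (X i j)^2) / F) * (∑ i, ((X *ᵥ (RCD X y j β - βLS)) i)^2)
      ≤ (1 - lmin / F) * ∑ i, ((X *ᵥ (β - βLS)) i)^2 := by
  set r : Fin p → ℝ := β - βLS with hr
  set g : Fin p → ℝ := (Xᵀ * X) *ᵥ r with hg
  set f : ℝ := ∑ i, ((X *ᵥ r) i)^2 with hf
  set c : Fin p → ℝ := fun j => ∑ i, (X i j)^2 with hc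
  have key1 : ∀ j, (∑ i, X i j * (y i - X.mulVec β i)) = - g j := by
    intro j
    have h1 : y - X *ᵥ β = (y - X *ᵥ βLS) - X *ᵥ r := by
      rw [hr, mulVec_sub]; abel
    have h2 : Xᵀ *ᵥ (y - X *ᵥ β) = - g := by
      rw [h1, mulVec_sub, hres, hg, ← mulVec_mulVec]; abel
    calc (∑ i, X i j * (y i - X.mulVec β i)) = (Xᵀ *ᵥ (y - X *ᵥ β)) j := by
          simp [mulVec, dotProduct, transpose_apply]
      _ = - g j := by rw [h2]; rfl
  have key3 : ∀ j, X *ᵥ (RCD X y j β - βLS) = X *ᵥ r + (-(g j)/(c j)) • (fun i => X i j) := by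
    intro j
    have : RCD X y j β - βLS = r + (-(g j)/(c j)) • (Pi.single j 1 : Fin p → ℝ) := by
      rw [RCD, key1 j]
      rw [hr]
      abel
    rw [this, mulVec_add, mulVec_smul]
    congr 1
    congr 1
    funext i
    simpa using congrFun (mulVec_single X j (1:ℝ)) i
  have keyg : ∀ j, ∑ i, (X *ᵥ r) i * X i j = g j := by
    intro j
    calc ∑ i, (X *ᵥ r) i * X i j = (Xᵀ *ᵥ (X *ᵥ r)) j := by
          simp [mulVec, dotProduct, transpose_apply, mul_comm]
      _ = g j := by rw [mulVec_mulVec]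
  have key4 : ∀ j, (∑ i, ((X *ᵥ (RCD X y j β - βLS)) i)^2) = f - (g j)^2 / c j := by
    intro j
    have hcj := hcols j
    rw [key3 j]
    have expand : ∑ i, ((X *ᵥ r + (-(g j)/(c j)) • (fun i => X i j)) i)^2
        = f + 2 * (-(g j)/(c j)) * (∑ i, (X *ᵥ r) i * X i j)
          + (-(g j)/(c j))^2 * (∑ i, (X i j)^2) := by
      rw [hf, Finset.mul_sum, Finset.mul_sum, ← Finset.sum_add_distrib, ← Finset.sum_add_distrib]
      exact Finset.sum_congr rfl fun i _ => by simp [Pi.add_apply, Pi.smul_apply, smul_eq_mul]; ring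
    rw [expand, keyg j]
    have : c j ≠ 0 := ne_of_gt hcj
    field_simp
    ring
  have sumc : ∑ j, c j = F := by rw [hF]
  have step1 : ∑ j, ((c j) / F) * (∑ i, ((X *ᵥ (RCD X y j β - βLS)) i)^2)
      = f - (∑ j, (g j)^2) / F := by
    have : ∀ j ∈ Finset.univ, ((c j) / F) * (∑ i, ((X *ᵥ (RCD X y j β - βLS)) i)^2)
        = (c j / F) * f - (g j)^2 / F := by
      intro j _
      rw [key4 j]
      have hcj : c j ≠ 0 := ne_of_gt (hcols j)
      field_simp
    rw [Finset.sum_congr rfl this, Finset.sum_sub_distrib]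
    have h3 : ∀ x ∈ Finset.univ, c x / F * f = c x * (f / F) := fun x _ => by ring
    rw [Finset.sum_congr rfl h3, ← Finset.sum_mul, sumc, ← Finset.sum_div]
    rw [mul_comm, div_mul_cancel₀ _ (ne_of_gt hFpos)]
  -- spectral bound: ∑ g² ≥ lmin * f
  have hfq : f = r ⬝ᵥ (Xᵀ * X) *ᵥ r := normXr X r
  obtain ⟨w, hw1, hw2, hw3⟩ := quad_repr hA r
  have specb : lmin * f ≤ ∑ j, (g j)^2 := by
    rw [hfq, hw2, hg, hw3, Finset.mul_sum]
    apply Finset.sum_le_sum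
    intro k _
    have h1 := hle k
    have h2 : (0:ℝ) ≤ (w k)^2 := sq_nonneg _
    nlinarith [mul_nonneg (mul_nonneg (sub_nonneg.2 h1) (hlmin.le.trans h1)) h2]
  have hfnn : 0 ≤ f := Finset.sum_nonneg fun i _ => sq_nonneg _
  rw [step1]
  have h5 : lmin * f / F ≤ (∑ j, (g j)^2) / F := by
    gcongr
  have h4 : (1 - lmin/F) * f = f - lmin * f / F := by ring
  rw [h4]
  linarith

/-- The result of applying coordinate descent updates successively on coordinates
`ω 1, …, ω t`, starting from `β0`. -/
noncomputable def iterRCD {n p : ℕ} (X : Matrix (Fin n) (Fin p) ℝ) (y : Fin n → ℝ)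
    (β0 : Fin p → ℝ) (t : ℕ) (ω : Fin t → Fin p) : Fin p → ℝ :=
  (List.ofFn ω).foldl (fun β j => RCD X y j β) β0

lemma rcd_iter {n p : ℕ} (X : Matrix (Fin n) (Fin p) ℝ) (y : Fin n → ℝ) (βLS : Fin p → ℝ)
    (hres : Xᵀ *ᵥ (y - X *ᵥ βLS) = 0)
    (hcols : ∀ j, 0 < ∑ i, (X i j)^2)
    (hA : (Xᵀ * X).IsHermitian)
    (lmin : ℝ) (hlmin : 0 < lmin) (hle : ∀ k, lmin ≤ hA.eigenvalues k)
    (F : ℝ) (hF : F = ∑ j, ∑ i, (X i j)^2) (hFpos : 0 < F) (hlF : lmin ≤ F)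
    (t : ℕ) :
    ∀ β : Fin p → ℝ,
      ∑ ω : Fin t → Fin p, (∏ k, (∑ i, (X i (ω k))^2) / F) *
          (∑ i, ((X *ᵥ (iterRCD X y β t ω - βLS)) i)^2)
        ≤ (1 - lmin / F)^t * (∑ i, ((X *ᵥ (β - βLS)) i)^2) := by
  have hρ : 0 ≤ 1 - lmin / F := by
    have : lmin / F ≤ 1 := (div_le_one hFpos).mpr hlF
    linarith
  induction t with
  | zero =>
    intro β
    simp [iterRCD]
  | succ t ih =>
    intro β
    have hsplit : ∀ (j : Fin p) (ω' : Fin t → Fin p),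
        iterRCD X y β (t+1) (Fin.cons j ω') = iterRCD X y (RCD X y j β) t ω' := by
      intro j ω'
      simp [iterRCD, List.ofFn_succ, Fin.cons_zero, Fin.cons_succ]
    calc ∑ ω : Fin (t+1) → Fin p, (∏ k, (∑ i, (X i (ω k))^2) / F) *
            (∑ i, ((X *ᵥ (iterRCD X y β (t+1) ω - βLS)) i)^2)
        = ∑ j : Fin p, ∑ ω' : Fin t → Fin p,
            (((∑ i, (X i j)^2) / F) * ∏ k, (∑ i, (X i (ω' k))^2) / F) *
            (∑ i, ((X *ᵥ (iterRCD X y (RCD X y j β) t ω' - βLS)) i)^2) := by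
          rw [← Fintype.sum_prod_type']
          apply Fintype.sum_equiv (Fin.consEquiv (fun _ : Fin (t+1) => Fin p)).symm
          intro ω
          rw [show (Fin.consEquiv (fun _ : Fin (t+1) => Fin p)).symm ω = (ω 0, fun i => ω i.succ) from rfl]
          have hω : ω = Fin.cons (ω 0) (fun i => ω i.succ) := by
            funext k
            exact (Fin.cons_self_tail ω ▸ rfl)
          rw [show iterRCD X y (RCD X y (ω 0) β) t (fun i => ω i.succ)
              = iterRCD X y β (t+1) ω by rw [← hsplit]; exact congrArg _ hω.symm]
          congr 1
          rw [Fin.prod_univ_succ]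
      _ ≤ ∑ j : Fin p, ((∑ i, (X i j)^2) / F) *
            ((1 - lmin / F)^t * (∑ i, ((X *ᵥ (RCD X y j β - βLS)) i)^2)) := by
          apply Finset.sum_le_sum
          intro j _
          have hcf : 0 ≤ (∑ i, (X i j)^2) / F := div_nonneg (hcols j).le hFpos.le
          calc ∑ ω' : Fin t → Fin p,
                (((∑ i, (X i j)^2) / F) * ∏ k, (∑ i, (X i (ω' k))^2) / F) *
                (∑ i, ((X *ᵥ (iterRCD X y (RCD X y j β) t ω' - βLS)) i)^2)
              = ((∑ i, (X i j)^2) / F) * ∑ ω' : Fin t → Fin p,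
                (∏ k, (∑ i, (X i (ω' k))^2) / F) *
                (∑ i, ((X *ᵥ (iterRCD X y (RCD X y j β) t ω' - βLS)) i)^2) := by
                rw [Finset.mul_sum]
                exact Finset.sum_congr rfl fun ω' _ => by ring
            _ ≤ _ := mul_le_mul_of_nonneg_left (ih (RCD X y j β)) hcf
      _ = (1 - lmin / F)^t * ∑ j : Fin p, ((∑ i, (X i j)^2) / F) *
            (∑ i, ((X *ᵥ (RCD X y j β - βLS)) i)^2) := by
          rw [Finset.mul_sum]
          exact Finset.sum_congr rfl fun j _ => by ring
      _ ≤ (1 - lmin / F)^t * ((1 - lmin / F) * (∑ i, ((X *ᵥ (β - βLS)) i)^2)) := by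
          apply mul_le_mul_of_nonneg_left _ (pow_nonneg hρ t)
          exact rcd_step X y βLS hres hcols hA lmin hlmin hle F hF hFpos β
      _ = (1 - lmin / F)^(t+1) * (∑ i, ((X *ᵥ (β - βLS)) i)^2) := by ring

lemma quad_lower_upper {p : ℕ} {M : Matrix (Fin p) (Fin p) ℝ} (hM : M.IsHermitian)
    (lmin lmax : ℝ) (hlmin : 0 ≤ lmin)
    (hle : ∀ k, lmin ≤ hM.eigenvalues k) (hge : ∀ k, hM.eigenvalues k ≤ lmax)
    (v : Fin p → ℝ) :
    lmin * ∑ k, (v k)^2 ≤ v ⬝ᵥ M *ᵥ v ∧ v ⬝ᵥ M *ᵥ v ≤ lmax * ∑ k, (v k)^2 := by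
  obtain ⟨w, hw1, hw2, _⟩ := quad_repr hM v
  rw [hw2, ← hw1, Finset.mul_sum, Finset.mul_sum]
  constructor
  · exact Finset.sum_le_sum fun k _ => mul_le_mul_of_nonneg_right (hle k) (sq_nonneg _)
  · exact Finset.sum_le_sum fun k _ => mul_le_mul_of_nonneg_right (hge k) (sq_nonneg _)

/-- If `X` has full column rank (so `λ_min(XᵀX) > 0`), all columns of `X`
are nonzero, and `β_LS = (XᵀX)⁻¹Xᵀy`, then the Randomized Coordinate Descent iterates
themselves converge linearly in expectation to the least-squares solution:
`E‖β_t − β_LS‖² ≤ (λ_max(XᵀX)/λ_min(XᵀX)) (1 − λ_min(XᵀX)/‖X‖_F²)^t ‖β_0 − β_LS‖²`. -/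
theorem randomized_cd_iterate_convergence {n p : ℕ}
    (X : Matrix (Fin n) (Fin p) ℝ) (y : Fin n → ℝ)
    (hrank : X.rank = p)
    (hcols : ∀ j, (fun i => X i j) ≠ 0)
    (hA : (Xᵀ * X).IsHermitian)
    (hmin : 0 < ⨅ k, hA.eigenvalues k)
    (βLS : Fin p → ℝ) (hβLS : βLS = (Xᵀ * X)⁻¹.mulVec (Xᵀ.mulVec y))
    (β0 : Fin p → ℝ) (t : ℕ) :
    ∑ ω : Fin t → Fin p,
        (∏ k, (∑ i, (X i (ω k)) ^ 2) / ∑ j, ∑ i, (X i j) ^ 2) *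
          ∑ k, (iterRCD X y β0 t ω k - βLS k) ^ 2
      ≤ ((⨆ k, hA.eigenvalues k) / (⨅ k, hA.eigenvalues k)) *
        (1 - (⨅ k, hA.eigenvalues k) / ∑ j, ∑ i, (X i j) ^ 2) ^ t *
        ∑ k, (β0 k - βLS k) ^ 2 := by
  rcases Nat.eq_zero_or_pos p with hp | hp
  · subst hp
    rw [show (⨅ k : Fin 0, hA.eigenvalues k) = 0 by
      rw [iInf, Set.range_eq_empty, Real.sInf_empty]] at hmin
    exact absurd hmin (lt_irrefl 0)
  haveI : Nonempty (Fin p) := Fin.pos_iff_nonempty.mp hp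
  set μ := hA.eigenvalues with hμ
  set lmin : ℝ := ⨅ k, μ k with hlmin_def
  set lmax : ℝ := ⨆ k, μ k with hlmax_def
  have hle : ∀ k, lmin ≤ μ k := fun k => ciInf_le (Finite.bddBelow_range _) k
  have hge : ∀ k, μ k ≤ lmax := fun k => le_ciSup (Finite.bddAbove_range _) k
  set F : ℝ := ∑ j, ∑ i, (X i j)^2 with hF
  have hcols' : ∀ j, 0 < ∑ i, (X i j)^2 := by
    intro j
    obtain ⟨i, hi⟩ := Function.ne_iff.mp (hcols j)
    exact Finset.sum_pos' (fun i _ => sq_nonneg _)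
      ⟨i, Finset.mem_univ i, pow_two_pos_of_ne_zero hi⟩
  have hFpos : 0 < F := Finset.sum_pos (fun j _ => hcols' j) Finset.univ_nonempty
  -- trace identity : F = ∑ μ
  have htrace : F = ∑ k, μ k := by
    have h1 : F = (Xᵀ * X).trace := by
      rw [hF]
      simp [Matrix.trace, Matrix.diag, Matrix.mul_apply, sq, transpose_apply]
    have h2 : (Xᵀ * X).trace = ∑ k, μ k := by
      conv_lhs => rw [hA.spectral_theorem]
      rw [Unitary.conjStarAlgAut_apply, Matrix.trace_mul_cycle]
      rw [mem_unitaryGroup_iff'.mp hA.eigenvectorUnitary.2, one_mul]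
      simp [Matrix.trace_diagonal]
      rfl
    rw [h1, h2]
  have hlF : lmin ≤ F := by
    rw [htrace]
    calc lmin ≤ μ (Classical.arbitrary (Fin p)) := hle _
      _ ≤ ∑ k, μ k := Finset.single_le_sum
          (fun k _ => le_trans hmin.le (hle k)) (Finset.mem_univ _)
  -- invertibility and residual orthogonality
  have hdet : (Xᵀ * X).det ≠ 0 := by
    have := hA.det_eq_prod_eigenvalues
    rw [this]
    have : ∀ k ∈ Finset.univ, (0:ℝ) < μ k := fun k _ => lt_of_lt_of_le hmin (hle k)
    have hpos := Finset.prod_pos this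
    simpa using ne_of_gt hpos
  have hres : Xᵀ *ᵥ (y - X *ᵥ βLS) = 0 := by
    rw [mulVec_sub, hβLS, mulVec_mulVec, mulVec_mulVec,
      Matrix.mul_nonsing_inv _ (isUnit_iff_ne_zero.mpr hdet), one_mulVec, sub_self]
  -- main chain
  have hiter := rcd_iter X y βLS hres hcols' hA lmin hmin hle F hF hFpos hlF t β0
  have hρ : 0 ≤ 1 - lmin / F := by
    have : lmin / F ≤ 1 := (div_le_one hFpos).mpr hlF
    linarith
  set S0 : ℝ := ∑ k, (β0 k - βLS k)^2 with hS0
  have hupper : ∑ i, ((X *ᵥ (β0 - βLS)) i)^2 ≤ lmax * S0 := by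
    rw [normXr]
    have := (quad_lower_upper hA lmin lmax hmin.le hle hge (β0 - βLS)).2
    simpa [hS0] using this
  have hlow : ∀ ω : Fin t → Fin p,
      lmin * ∑ k, (iterRCD X y β0 t ω k - βLS k)^2
        ≤ ∑ i, ((X *ᵥ (iterRCD X y β0 t ω - βLS)) i)^2 := by
    intro ω
    rw [normXr]
    have := (quad_lower_upper hA lmin lmax hmin.le hle hge (iterRCD X y β0 t ω - βLS)).1
    simpa using this
  have hPnn : ∀ ω : Fin t → Fin p, 0 ≤ ∏ k, (∑ i, (X i (ω k))^2) / F :=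
    fun ω => Finset.prod_nonneg fun k _ => div_nonneg (hcols' _).le hFpos.le
  have key : lmin * ∑ ω : Fin t → Fin p,
      (∏ k, (∑ i, (X i (ω k))^2) / F) * ∑ k, (iterRCD X y β0 t ω k - βLS k)^2
      ≤ lmax * ((1 - lmin / F)^t * S0) := by
    calc lmin * ∑ ω : Fin t → Fin p,
          (∏ k, (∑ i, (X i (ω k))^2) / F) * ∑ k, (iterRCD X y β0 t ω k - βLS k)^2
        = ∑ ω : Fin t → Fin p, (∏ k, (∑ i, (X i (ω k))^2) / F) *
            (lmin * ∑ k, (iterRCD X y β0 t ω k - βLS k)^2) := by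
          rw [Finset.mul_sum]; exact Finset.sum_congr rfl fun ω _ => by ring
      _ ≤ ∑ ω : Fin t → Fin p, (∏ k, (∑ i, (X i (ω k))^2) / F) *
            (∑ i, ((X *ᵥ (iterRCD X y β0 t ω - βLS)) i)^2) :=
          Finset.sum_le_sum fun ω _ => mul_le_mul_of_nonneg_left (hlow ω) (hPnn ω)
      _ ≤ (1 - lmin / F)^t * (∑ i, ((X *ᵥ (β0 - βLS)) i)^2) := hiter
      _ ≤ (1 - lmin / F)^t * (lmax * S0) :=
          mul_le_mul_of_nonneg_left hupper (pow_nonneg hρ t)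
      _ = lmax * ((1 - lmin / F)^t * S0) := by ring
  have hgoal : (lmax / lmin) * (1 - lmin / F)^t * S0
      = (lmax * ((1 - lmin / F)^t * S0)) / lmin := by
    field_simp
  rw [hgoal, le_div_iff₀ hmin]
  calc (∑ ω : Fin t → Fin p,
        (∏ k, (∑ i, (X i (ω k))^2) / F) * ∑ k, (iterRCD X y β0 t ω k - βLS k)^2) * lmin
      = lmin * ∑ ω : Fin t → Fin p,
        (∏ k, (∑ i, (X i (ω k))^2) / F) * ∑ k, (iterRCD X y β0 t ω k - βLS k)^2 := by ring
    _ ≤ lmax * ((1 - lmin / F)^t * S0) := key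
end

section
/- Suppose X has full row rank (so XXᵀ is invertible and λ_min(XXᵀ) > 0), every row of X is nonzero, and β_MN = Xᵀ(XXᵀ)⁻¹y is the minimum-norm solution of the consistent system Xβ = y. Starting from β_0 = 0, the Randomized Kaczmarz iterates satisfy Σ_ω P(ω) ‖β_t(ω) − β_MN‖² ≤ (1 − λ_min(XXᵀ)/‖X‖_F²)^t ‖β_MN‖², where for ω ∈ {1,…,n}^t, β_t(ω) is the result of applying Kaczmarz updates on rows ω_1,…,ω_t starting from 0 and P(ω) = ∏_k ‖X^{ω_k}‖²/‖X‖_F²; i.e., in the underconstrained case RK converges linearly in expectation to the minimum-norm solution. -/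
open Matrix BigOperators

lemma iterRK_snoc {n p t : ℕ} (X : Matrix (Fin n) (Fin p) ℝ) (y : Fin n → ℝ)
    (β0 : Fin p → ℝ) (ω : Fin t → Fin n) (i : Fin n) :
    iterRK X y β0 (t+1) (Fin.snoc ω i) = RK X y i (iterRK X y β0 t ω) := by
  unfold iterRK
  rw [List.ofFn_succ']
  simp [List.concat_eq_append, List.foldl_append]

lemma proj_id {p : ℕ} (x w : Fin p → ℝ) (s a : ℝ) (hs : s = ∑ j, (w j)^2) (hs0 : 0 < s)
    (ha : a = ∑ j, w j * x j) :
    ∑ k, (x k - (a / s) * w k)^2 = (∑ k, (x k)^2) - a^2 / s := by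
  have expand : ∀ k ∈ Finset.univ, (x k - (a/s) * w k)^2
      = ((x k)^2 - (2*a/s) * (w k * x k)) + (a/s)^2 * (w k)^2 := fun k _ => by ring
  rw [Finset.sum_congr rfl expand, Finset.sum_add_distrib, Finset.sum_sub_distrib,
    ← Finset.mul_sum, ← Finset.mul_sum, ← ha, ← hs]
  field_simp
  ring

lemma RK_err {n p : ℕ} (X : Matrix (Fin n) (Fin p) ℝ) (y : Fin n → ℝ)
    (βMN : Fin p → ℝ) (hsol : X *ᵥ βMN = y) (i : Fin n) (hsi : 0 < ∑ j, (X i j)^2)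
    (β : Fin p → ℝ) :
    ∑ k, (RK X y i β k - βMN k)^2
      = (∑ k, (β k - βMN k)^2) - (∑ j, X i j * (β j - βMN j))^2 / (∑ j, (X i j)^2) := by
  set s := ∑ j, (X i j)^2 with hs
  set a := ∑ j, X i j * (β j - βMN j) with ha
  have hyi : y i = ∑ k, X i k * βMN k := by
    rw [← hsol]; simp [Matrix.mulVec, dotProduct]
  have hnum : (y i - ∑ k, X i k * β k) / s = -(a / s) := by
    rw [hyi, ← neg_div]
    congr 1
    rw [ha, ← Finset.sum_neg_distrib, ← Finset.sum_sub_distrib]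
    exact Finset.sum_congr rfl fun j _ => by ring
  have hterm : ∀ k ∈ Finset.univ, (RK X y i β k - βMN k)^2
      = ((β k - βMN k) - (a / s) * X i k)^2 := by
    intro k _
    simp only [RK, Pi.add_apply, Pi.smul_apply, smul_eq_mul, ← hs, hnum]
    ring
  rw [Finset.sum_congr rfl hterm]
  exact proj_id (fun k => β k - βMN k) (X i) s a hs hsi ha

lemma spectral_bound {m : ℕ} [NeZero m] (A : Matrix (Fin m) (Fin m) ℝ) (hA : A.IsHermitian)
    (hnn : ∀ i, 0 ≤ hA.eigenvalues i) (v : Fin m → ℝ) :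
    (⨅ i, hA.eigenvalues i) * (v ⬝ᵥ A *ᵥ v) ≤ (A *ᵥ v) ⬝ᵥ (A *ᵥ v) := by
  set u : Matrix (Fin m) (Fin m) ℝ := (hA.eigenvectorUnitary : Matrix (Fin m) (Fin m) ℝ) with hu
  set lam := hA.eigenvalues
  set μ := ⨅ i, lam i with hμ
  have hμnn : 0 ≤ μ := le_ciInf hnn
  have hμle : ∀ i, μ ≤ lam i := fun i => ciInf_le (Set.Finite.bddBelow (Set.finite_range _)) i
  have huu : uᵀ * u = 1 := by
    have := (Matrix.mem_unitaryGroup_iff').mp hA.eigenvectorUnitary.2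
    simpa [hu, Matrix.star_eq_conjTranspose, Matrix.conjTranspose_eq_transpose_of_trivial]
      using this
  set w : Fin m → ℝ := uᵀ *ᵥ v with hw
  have hAv : A *ᵥ v = u *ᵥ ((Matrix.diagonal lam) *ᵥ w) := by
    conv_lhs => rw [hA.spectral_theorem]
    simp [hu, Matrix.star_eq_conjTranspose, Matrix.conjTranspose_eq_transpose_of_trivial,
      ← Matrix.mulVec_mulVec, hw]
    rfl
  have hdot : ∀ z : Fin m → ℝ, v ⬝ᵥ (u *ᵥ z) = w ⬝ᵥ z := by
    intro z
    rw [dotProduct_mulVec, hw, ← vecMul_transpose, transpose_transpose]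
  have hdot2 : ∀ x z : Fin m → ℝ, (u *ᵥ x) ⬝ᵥ (u *ᵥ z) = x ⬝ᵥ z := by
    intro x z
    rw [dotProduct_mulVec, vecMul_mulVec, huu, Matrix.vecMul_one]
  have h1 : v ⬝ᵥ A *ᵥ v = ∑ i, lam i * (w i)^2 := by
    rw [hAv, hdot]
    simp [dotProduct, mulVec_diagonal]
    exact Finset.sum_congr rfl fun i _ => by ring
  have h2 : (A *ᵥ v) ⬝ᵥ (A *ᵥ v) = ∑ i, (lam i)^2 * (w i)^2 := by
    rw [hAv, hdot2]
    simp [dotProduct, mulVec_diagonal]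
    exact Finset.sum_congr rfl fun i _ => by ring
  rw [h1, h2, Finset.mul_sum]
  apply Finset.sum_le_sum
  intro i _
  have : μ * lam i ≤ lam i * lam i := mul_le_mul_of_nonneg_right (hμle i) (hnn i)
  nlinarith [sq_nonneg (w i)]

lemma eig_sum_trace {m : ℕ} (A : Matrix (Fin m) (Fin m) ℝ) (hA : A.IsHermitian) :
    ∑ i, hA.eigenvalues i = A.trace := by
  set u : Matrix (Fin m) (Fin m) ℝ := (hA.eigenvectorUnitary : Matrix (Fin m) (Fin m) ℝ) with hu
  have huu : star u * u = 1 := (Matrix.mem_unitaryGroup_iff').mp hA.eigenvectorUnitary.2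
  conv_rhs => rw [hA.spectral_theorem]
  rw [Unitary.conjStarAlgAut_apply, Matrix.trace_mul_cycle, ← hu, huu, one_mul]
  simp [Matrix.trace_diagonal]

lemma step_bound {n p : ℕ} [NeZero n] (X : Matrix (Fin n) (Fin p) ℝ) (y : Fin n → ℝ)
    (hs : ∀ i, 0 < ∑ j, (X i j)^2) (hA : (X * Xᵀ).IsHermitian)
    (hnn : ∀ i, 0 ≤ hA.eigenvalues i)
    (βMN : Fin p → ℝ) (hsol : X *ᵥ βMN = y)
    (β : Fin p → ℝ) (v : Fin n → ℝ) (hv : ∀ k, β k - βMN k = (Xᵀ *ᵥ v) k) :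
    ∑ i, ((∑ j, (X i j)^2) / (∑ i, ∑ j, (X i j)^2)) * ∑ k, (RK X y i β k - βMN k)^2
      ≤ (1 - (⨅ i, hA.eigenvalues i) / (∑ i, ∑ j, (X i j)^2)) * ∑ k, (β k - βMN k)^2 := by
  set F := ∑ i, ∑ j, (X i j)^2 with hF
  set μ := ⨅ i, hA.eigenvalues i with hμ
  set E := ∑ k, (β k - βMN k)^2 with hE
  have hF0 : 0 < F := Finset.sum_pos (fun i _ => hs i) ⟨⟨0, Nat.pos_of_ne_zero (NeZero.ne n)⟩,
    Finset.mem_univ _⟩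
  have hLHS : ∑ i, ((∑ j, (X i j)^2) / F) * ∑ k, (RK X y i β k - βMN k)^2
      = E - (∑ i, (∑ j, X i j * (β j - βMN j))^2) / F := by
    have : ∀ i ∈ Finset.univ, ((∑ j, (X i j)^2) / F) * ∑ k, (RK X y i β k - βMN k)^2
        = (∑ j, (X i j)^2) * E / F - (∑ j, X i j * (β j - βMN j))^2 / F := by
      intro i _
      rw [RK_err X y βMN hsol i (hs i) β, ← hE]
      have hsi := (hs i).ne'
      field_simp
    rw [Finset.sum_congr rfl this, Finset.sum_sub_distrib, ← Finset.sum_div, ← Finset.sum_div,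
      ← Finset.sum_mul, ← hF]
    congr 1
    field_simp
  rw [hLHS]
  have hEq : E = v ⬝ᵥ ((X * Xᵀ) *ᵥ v) := by
    have e1 : E = (Xᵀ *ᵥ v) ⬝ᵥ (Xᵀ *ᵥ v) := by
      rw [hE]
      simp only [dotProduct]
      exact Finset.sum_congr rfl fun k _ => by rw [hv k]; ring
    rw [e1, dotProduct_mulVec, vecMul_mulVec, transpose_transpose, ← dotProduct_mulVec]
  have h1 : ∀ i, ∑ j, X i j * (β j - βMN j) = ((X * Xᵀ) *ᵥ v) i := by
    intro i
    rw [← Matrix.mulVec_mulVec]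
    simp only [Matrix.mulVec, dotProduct]
    exact Finset.sum_congr rfl fun j _ => by rw [hv j]; rfl
  have hXe : ∑ i, (∑ j, X i j * (β j - βMN j))^2 = ((X * Xᵀ) *ᵥ v) ⬝ᵥ ((X * Xᵀ) *ᵥ v) := by
    simp only [dotProduct]
    exact Finset.sum_congr rfl fun i _ => by rw [h1 i]; ring
  have hspec : μ * E ≤ ∑ i, (∑ j, X i j * (β j - βMN j))^2 := by
    rw [hXe, hEq]
    exact spectral_bound (X * Xᵀ) hA hnn v
  have hdiv : μ * E / F ≤ (∑ i, (∑ j, X i j * (β j - βMN j))^2) / F :=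
    div_le_div_of_nonneg_right hspec hF0.le
  have : (1 - μ / F) * E = E - μ * E / F := by ring
  rw [this]
  linarith

lemma rowspace {n p : ℕ} (X : Matrix (Fin n) (Fin p) ℝ) (y : Fin n → ℝ)
    (βMN : Fin p → ℝ) :
    ∀ (l : List (Fin n)) (β : Fin p → ℝ) (v : Fin n → ℝ),
      (∀ k, β k - βMN k = (Xᵀ *ᵥ v) k) →
      ∃ v', ∀ k, (l.foldl (fun β i => RK X y i β) β) k - βMN k = (Xᵀ *ᵥ v') k := by
  intro l
  induction l with
  | nil => exact fun β v h => ⟨v, h⟩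
  | cons i l ih =>
    intro β v h
    simp only [List.foldl_cons]
    apply ih (RK X y i β)
      (v + (((y i - ∑ k, X i k * β k) / ∑ k, (X i k)^2) : ℝ) • (Pi.single i 1 : Fin n → ℝ))
    intro k
    have hone : (Xᵀ *ᵥ Pi.single i (1:ℝ)) k = X i k := by
      simp [Matrix.mulVec_single]
    rw [Matrix.mulVec_add, Matrix.mulVec_smul]
    simp only [Pi.add_apply, Pi.smul_apply, smul_eq_mul, hone]
    simp only [RK, Pi.add_apply, Pi.smul_apply, smul_eq_mul]
    linarith [h k]

/-- If `X` has full row rank (`XXᵀ` invertible), all rows of `X` are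
nonzero, and `β_MN = Xᵀ(XXᵀ)⁻¹y` is the minimum-norm solution of `Xβ = y`, then the
Randomized Kaczmarz iterates started from `β_0 = 0` converge linearly in expectation to
`β_MN`: `E‖β_t − β_MN‖² ≤ (1 − λ_min(XXᵀ)/‖X‖_F²)^t ‖β_MN‖²`. -/
theorem randomized_kaczmarz_min_norm_convergence {n p : ℕ}
    (X : Matrix (Fin n) (Fin p) ℝ) (y : Fin n → ℝ)
    (hrows : ∀ i, X i ≠ 0)
    (hinv : IsUnit (X * Xᵀ).det)
    (hA : (X * Xᵀ).IsHermitian)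
    (βMN : Fin p → ℝ) (hMN : βMN = Xᵀ.mulVec ((X * Xᵀ)⁻¹.mulVec y))
    (t : ℕ) :
    ∑ ω : Fin t → Fin n,
        (∏ k, (∑ j, (X (ω k) j) ^ 2) / ∑ i, ∑ j, (X i j) ^ 2) *
          ∑ k, (iterRK X y 0 t ω k - βMN k) ^ 2
      ≤ (1 - (⨅ i, hA.eigenvalues i) / ∑ i, ∑ j, (X i j) ^ 2) ^ t *
        ∑ k, (βMN k) ^ 2 := by
  classical
  rcases Nat.eq_zero_or_pos n with hn | hn
  · subst hn
    have hβ : βMN = 0 := by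
      rw [hMN]; ext k; simp [Matrix.mulVec, dotProduct]
    cases t with
    | zero => simp [iterRK, hβ]
    | succ t =>
      haveI : IsEmpty (Fin (t+1) → Fin 0) := ⟨fun ω => (ω 0).elim0⟩
      rw [Finset.univ_eq_empty, Finset.sum_empty]
      have h0 : ∑ k, (βMN k)^2 = 0 := by simp [hβ]
      rw [h0, mul_zero]
  · haveI : NeZero n := ⟨hn.ne'⟩
    have hs : ∀ i, 0 < ∑ j, (X i j)^2 := by
      intro i
      rcases Function.ne_iff.mp (hrows i) with ⟨j, hj⟩
      exact Finset.sum_pos' (fun j _ => sq_nonneg _) ⟨j, Finset.mem_univ _, lt_of_le_of_ne (sq_nonneg _) (Ne.symm (pow_ne_zero 2 hj))⟩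
    set F := ∑ i, ∑ j, (X i j)^2 with hF
    have hF0 : 0 < F := Finset.sum_pos (fun i _ => hs i) Finset.univ_nonempty
    have hsol : X *ᵥ βMN = y := by
      rw [hMN, Matrix.mulVec_mulVec, Matrix.mulVec_mulVec,
        Matrix.mul_nonsing_inv _ hinv, Matrix.one_mulVec]
    have hnn : ∀ i, 0 ≤ hA.eigenvalues i := by
      intro i
      have hpsd : (X * Xᵀ).PosSemidef := by
        have := Matrix.posSemidef_self_mul_conjTranspose X
        rwa [Matrix.conjTranspose_eq_transpose_of_trivial] at this
      exact hpsd.eigenvalues_nonneg i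
    set μ := ⨅ i, hA.eigenvalues i with hμ
    have hμF : μ ≤ F := by
      have h1 : μ ≤ hA.eigenvalues ⟨0, hn⟩ :=
        ciInf_le (Set.Finite.bddBelow (Set.finite_range _)) _
      have h2 : hA.eigenvalues ⟨0, hn⟩ ≤ ∑ i, hA.eigenvalues i :=
        Finset.single_le_sum (fun i _ => hnn i) (Finset.mem_univ _)
      have h3 : ∑ i, hA.eigenvalues i = F := by
        rw [eig_sum_trace _ hA, Matrix.trace, hF]
        apply Finset.sum_congr rfl
        intro i _
        simp [Matrix.diag, Matrix.mul_apply, pow_two]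
      linarith
    have hc0 : 0 ≤ 1 - μ / F := by
      rw [sub_nonneg]
      exact (div_le_one hF0).mpr hμF
    have hrs : ∀ (t : ℕ) (ω : Fin t → Fin n),
        ∃ v, ∀ k, iterRK X y 0 t ω k - βMN k = (Xᵀ *ᵥ v) k := by
      intro t ω
      apply rowspace X y βMN (List.ofFn ω) 0 (-((X * Xᵀ)⁻¹ *ᵥ y))
      intro k
      rw [Matrix.mulVec_neg, hMN]
      simp
    induction t with
    | zero =>
      simp [iterRK]
    | succ t ih =>
      have key : ∀ (g : (Fin (t+1) → Fin n) → ℝ),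
          ∑ ω : Fin (t+1) → Fin n, g ω
            = ∑ x : Fin n × (Fin t → Fin n), g (Fin.snoc x.2 x.1) := by
        intro g
        exact (Fintype.sum_equiv (Fin.snocEquiv (fun _ => Fin n))
          (fun x => g (Fin.snoc x.2 x.1)) g (fun x => rfl)).symm
      rw [key]
      have hterm : ∀ x : Fin n × (Fin t → Fin n),
          (∏ k, (∑ j, (X ((Fin.snoc x.2 x.1 : Fin (t+1) → Fin n) k) j) ^ 2) / F) *
            ∑ k, (iterRK X y 0 (t+1) (Fin.snoc x.2 x.1) k - βMN k) ^ 2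
          = (∏ k, (∑ j, (X (x.2 k) j) ^ 2) / F) *
              (((∑ j, (X x.1 j)^2) / F) *
                ∑ k, (RK X y x.1 (iterRK X y 0 t x.2) k - βMN k) ^ 2) := by
        intro x
        rw [iterRK_snoc, Fin.prod_univ_castSucc]
        simp only [Fin.snoc_castSucc, Fin.snoc_last]
        ring
      rw [Finset.sum_congr rfl (fun x _ => hterm x)]
      rw [Fintype.sum_prod_type_right]
      have hstep : ∀ ω : Fin t → Fin n,
          ∑ i, (∏ k, (∑ j, (X (ω k) j) ^ 2) / F) *
              (((∑ j, (X i j)^2) / F) * ∑ k, (RK X y i (iterRK X y 0 t ω) k - βMN k) ^ 2)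
            ≤ (∏ k, (∑ j, (X (ω k) j) ^ 2) / F) *
                ((1 - μ / F) * ∑ k, (iterRK X y 0 t ω k - βMN k) ^ 2) := by
        intro ω
        rw [← Finset.mul_sum]
        apply mul_le_mul_of_nonneg_left _ (Finset.prod_nonneg fun k _ =>
          div_nonneg (Finset.sum_nonneg fun j _ => sq_nonneg _) hF0.le)
        obtain ⟨v, hv⟩ := hrs t ω
        exact step_bound X y hs hA hnn βMN hsol (iterRK X y 0 t ω) v hv
      calc ∑ ω : Fin t → Fin n, ∑ i, (∏ k, (∑ j, (X (ω k) j) ^ 2) / F) *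
              (((∑ j, (X i j)^2) / F) * ∑ k, (RK X y i (iterRK X y 0 t ω) k - βMN k) ^ 2)
          ≤ ∑ ω : Fin t → Fin n, (∏ k, (∑ j, (X (ω k) j) ^ 2) / F) *
              ((1 - μ / F) * ∑ k, (iterRK X y 0 t ω k - βMN k) ^ 2) :=
            Finset.sum_le_sum fun ω _ => hstep ω
        _ = (1 - μ / F) * ∑ ω : Fin t → Fin n, (∏ k, (∑ j, (X (ω k) j) ^ 2) / F) *
              ∑ k, (iterRK X y 0 t ω k - βMN k) ^ 2 := by
            rw [Finset.mul_sum]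
            exact Finset.sum_congr rfl fun ω _ => by ring
        _ ≤ (1 - μ / F) * ((1 - μ / F) ^ t * ∑ k, (βMN k) ^ 2) :=
            mul_le_mul_of_nonneg_left ih hc0
        _ = (1 - μ / F) ^ (t+1) * ∑ k, (βMN k) ^ 2 := by ring
end

section
/- Let A be a real symmetric positive semidefinite m×m matrix with strictly positive diagonal entries, b ∈ ℝ^m, and suppose x* satisfies Ax* = b. For x ∈ ℝ^m and index i, define the coordinate descent update CD_i(x) = x + ((b_i − A_i·x)/A_ii) e_i, where A_i is the i-th row of A. If index i is chosen with probability A_ii/Tr(A), then Σ_{i=1}^m (A_ii/Tr(A)) ‖CD_i(x) − x*‖²_A ≤ (1 − λ_min(A)/Tr(A)) ‖x − x*‖²_A, where ‖v‖²_A = vᵀAv and λ_min(A) is the smallest eigenvalue of A. -/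
open Matrix BigOperators

lemma quad_sq_bound {m : ℕ} (A : Matrix (Fin m) (Fin m) ℝ) (hA : A.PosSemidef)
    (e : Fin m → ℝ) :
    (⨅ i, hA.isHermitian.eigenvalues i) * (e ⬝ᵥ A.mulVec e) ≤ A.mulVec e ⬝ᵥ A.mulVec e := by
  rcases Nat.eq_zero_or_pos m with hm | hm
  · subst hm; simp [dotProduct]
  haveI : Nonempty (Fin m) := Fin.pos_iff_nonempty.mp hm
  set H := hA.isHermitian
  set U : Matrix (Fin m) (Fin m) ℝ := (Matrix.IsHermitian.eigenvectorUnitary H : Matrix (Fin m) (Fin m) ℝ) with hU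
  set lam := H.eigenvalues with hlam
  set c : Fin m → ℝ := e ᵥ* U with hc
  have hspec : A = U * Matrix.diagonal lam * star U := by
    have := H.spectral_theorem
    rwa [RCLike.ofReal_real_eq_id, Function.id_comp] at this
  have hstar : star U = Uᵀ := by
    ext i j; simp [star, Matrix.conjTranspose]
  have hUU : Uᵀ * U = 1 := by
    rw [← hstar, hU]; exact Unitary.coe_star_mul_self _
  have hAe : A.mulVec e = U.mulVec ((Matrix.diagonal lam).mulVec (Uᵀ.mulVec e)) := by
    rw [hspec, hstar]
    simp [Matrix.mulVec_mulVec, Matrix.mul_assoc]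
  have hcT : Uᵀ.mulVec e = c := by
    rw [hc, Matrix.mulVec_transpose]
  have h1 : e ⬝ᵥ A.mulVec e = ∑ i, lam i * c i ^ 2 := by
    rw [hAe, hcT, Matrix.dotProduct_mulVec, ← hc]
    simp [dotProduct, Matrix.mulVec_diagonal]
    apply Finset.sum_congr rfl; intro i _; ring
  have h2 : A.mulVec e ⬝ᵥ A.mulVec e = ∑ i, (lam i)^2 * c i ^ 2 := by
    rw [hAe, hcT, Matrix.dotProduct_mulVec]
    have : (U.mulVec ((Matrix.diagonal lam).mulVec c)) ᵥ* U
        = Uᵀ.mulVec (U.mulVec ((Matrix.diagonal lam).mulVec c)) := by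
      rw [Matrix.mulVec_transpose]
    rw [this, Matrix.mulVec_mulVec, hUU, Matrix.one_mulVec]
    simp [dotProduct, Matrix.mulVec_diagonal]
    apply Finset.sum_congr rfl; intro i _; ring
  rw [h1, h2, Finset.mul_sum]
  apply Finset.sum_le_sum
  intro i _
  have h0 : 0 ≤ lam i := hA.eigenvalues_nonneg i
  have hle : (⨅ j, lam j) ≤ lam i := ciInf_le (Finite.bddBelow_range _) i
  nlinarith [mul_nonneg (mul_nonneg (sub_nonneg.2 hle) h0) (sq_nonneg (c i))]

/-- The coordinate descent update for the system `Ax = b` on coordinate `i`: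
`CD_i(x) = x + ((b_i − A_i·x)/A_ii) e_i`. -/
noncomputable def CD {m : ℕ} (A : Matrix (Fin m) (Fin m) ℝ) (b : Fin m → ℝ)
    (i : Fin m) (x : Fin m → ℝ) : Fin m → ℝ :=
  x + ((b i - ∑ j, A i j * x j) / A i i) • (Pi.single i 1 : Fin m → ℝ)

/-- For a symmetric positive semidefinite `A` with positive diagonal and
`Ax* = b`, one randomized coordinate descent step (index `i` chosen with probability
`A_ii/Tr(A)`) contracts the expected error in the `A`-seminorm `‖v‖²_A = vᵀAv` by the
factor `1 − λ_min(A)/Tr(A)`. -/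
theorem rcd_psd_one_step {m : ℕ}
    (A : Matrix (Fin m) (Fin m) ℝ) (hA : A.PosSemidef)
    (hdiag : ∀ i, 0 < A i i)
    (b : Fin m → ℝ) (xstar : Fin m → ℝ) (hxstar : A.mulVec xstar = b)
    (x : Fin m → ℝ) :
    ∑ i, (A i i / A.trace) *
        ((CD A b i x - xstar) ⬝ᵥ A.mulVec (CD A b i x - xstar))
      ≤ (1 - (⨅ i, hA.isHermitian.eigenvalues i) / A.trace) *
        ((x - xstar) ⬝ᵥ A.mulVec (x - xstar)) := by
  rcases Nat.eq_zero_or_pos m with hm | hm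
  · subst hm; simp [dotProduct]
  haveI : Nonempty (Fin m) := Fin.pos_iff_nonempty.mp hm
  set e : Fin m → ℝ := x - xstar with he
  set r : Fin m → ℝ := A.mulVec e with hr
  have htr : A.trace = ∑ i, A i i := by simp [Matrix.trace, Matrix.diag]
  have hT : 0 < A.trace := by
    rw [htr]; exact Finset.sum_pos (fun i _ => hdiag i) Finset.univ_nonempty
  set Q : ℝ := e ⬝ᵥ A.mulVec e with hQ
  have hsym : ∀ p q : Fin m, A q p = A p q := by
    intro p q
    conv_lhs => rw [← hA.isHermitian]
    simp [Matrix.conjTranspose_apply]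
  have hri : ∀ i, b i - ∑ j, A i j * x j = -(r i) := by
    intro i
    have hb : ∑ j, A i j * xstar j = b i := by
      rw [← hxstar]; rfl
    simp only [hr, he, Matrix.mulVec, dotProduct, Pi.sub_apply, mul_sub,
      Finset.sum_sub_distrib, hb]
    ring
  have hCD : ∀ i, CD A b i x - xstar = e + (-(r i) / A i i) • (Pi.single i 1 : Fin m → ℝ) := by
    intro i
    rw [CD, hri i]
    ext j
    simp [he]
    ring
  have hq : ∀ i, (CD A b i x - xstar) ⬝ᵥ A.mulVec (CD A b i x - xstar)
      = Q - r i ^ 2 / A i i := by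
    intro i
    rw [hCD i]
    have hAs : A.mulVec (Pi.single i 1) = fun j => A j i := by
      ext j; simp [Matrix.mulVec_single]
    have heAs : e ⬝ᵥ A.mulVec (Pi.single i 1) = r i := by
      rw [hAs, hr]
      simp only [dotProduct, Matrix.mulVec]
      apply Finset.sum_congr rfl
      intro j _
      rw [hsym i j]; ring
    have hsAe : (Pi.single i 1 : Fin m → ℝ) ⬝ᵥ A.mulVec e = r i := by
      rw [single_dotProduct, one_mul, hr]
    have hss : (Pi.single i 1 : Fin m → ℝ) ⬝ᵥ A.mulVec (Pi.single i 1) = A i i := by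
      rw [single_dotProduct, one_mul, hAs]
    simp only [Matrix.mulVec_add, Matrix.mulVec_smul, dotProduct_add,
      add_dotProduct, dotProduct_smul, smul_dotProduct, smul_eq_mul,
      heAs, hsAe, hss, ← hQ]
    field_simp [(hdiag i).ne']
    ring
  have hsum : ∑ i, (A i i / A.trace) * ((CD A b i x - xstar) ⬝ᵥ A.mulVec (CD A b i x - xstar))
      = Q - (r ⬝ᵥ r) / A.trace := by
    have hterm : ∀ i : Fin m, (A i i / A.trace) * (Q - r i ^ 2 / A i i)
        = A i i * Q / A.trace - r i ^ 2 / A.trace := by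
      intro i
      field_simp [(hdiag i).ne', hT.ne']
    simp only [hq, hterm]
    rw [Finset.sum_sub_distrib, ← Finset.sum_div, ← Finset.sum_div, ← Finset.sum_mul, ← htr]
    congr 1
    · field_simp
    · congr 1
      simp [dotProduct, sq]
  rw [hsum]
  have hkey : (⨅ i, hA.isHermitian.eigenvalues i) * Q ≤ r ⬝ᵥ r := quad_sq_bound A hA e
  have h3 : (⨅ i, hA.isHermitian.eigenvalues i) * Q / A.trace ≤ (r ⬝ᵥ r) / A.trace :=
    (div_le_div_iff_of_pos_right hT).mpr hkey
  rw [sub_mul, one_mul, div_mul_eq_mul_div]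
  linarith
end

section
/- The Randomized Kaczmarz update is the randomized coordinate descent update for the positive semidefinite system XXᵀα = y under the substitution β = Xᵀα: if β = Xᵀα and α' = α + ((y^i − (XXᵀα)_i)/(XXᵀ)_{ii}) e_i is the coordinate descent update of α on coordinate i for the system XXᵀα = y (with X^i ≠ 0, noting (XXᵀ)_{ii} = ‖X^i‖²), then Xᵀα' = β + ((y^i − X^i·β)/‖X^i‖²) X^i, i.e., Xᵀα' equals the Kaczmarz update RK_i(β). -/
open Matrix BigOperators

/-- The Randomized Kaczmarz update is the randomized coordinate descent
update for the positive semidefinite system `XXᵀα = y` under the substitution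
`β = Xᵀα`: if `α'` is the coordinate descent update of `α` on coordinate `i` for
`XXᵀα = y`, then `Xᵀα'` equals the Kaczmarz update `RK_i(β)`. -/
theorem kaczmarz_is_cd_on_gram {n p : ℕ}
    (X : Matrix (Fin n) (Fin p) ℝ) (y : Fin n → ℝ)
    (i : Fin n) (hi : X i ≠ 0)
    (α : Fin n → ℝ) (β : Fin p → ℝ) (hβ : β = Xᵀ.mulVec α)
    (α' : Fin n → ℝ)
    (hα' : α' = α + ((y i - (X * Xᵀ).mulVec α i) / (X * Xᵀ) i i) •
      (Pi.single i 1 : Fin n → ℝ)) :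
    Xᵀ.mulVec α' = β + ((y i - ∑ k, X i k * β k) / ∑ k, (X i k) ^ 2) • X i := by
  subst hβ hα'
  have h1 : (X * Xᵀ).mulVec α i = ∑ k, X i k * Xᵀ.mulVec α k := by
    simp only [mulVec, dotProduct, mul_apply, transpose_apply, Finset.sum_mul,
      Finset.mul_sum]
    rw [Finset.sum_comm]
    simp [mul_assoc]
  have h2 : (X * Xᵀ) i i = ∑ k, (X i k) ^ 2 := by
    simp [mul_apply, sq]
  rw [h1, h2]
  funext j
  simp [mulVec, dotProduct, Finset.mul_sum, mul_add, Finset.sum_add_distrib,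
    Pi.single_apply, mul_ite, Finset.sum_ite_eq', mul_comm]
end

section
/- The ridge Randomized Kaczmarz updates preserve the relation β = Xᵀα and coincide with coordinate descent on the system (XXᵀ + λI_n)α = y: if β = Xᵀα and, for a row index i, one sets δ = (y^i − β·X^i − λα^i)/(‖X^i‖² + λ), α' = α + δ e_i, and β' = β + δ X^i, then β' = Xᵀα' and α' = α + ((y_i − ((XXᵀ + λI_n)α)_i)/((XXᵀ + λI_n)_{ii})) e_i, i.e., α' is the coordinate descent update of α on coordinate i for the positive definite system (XXᵀ + λI_n)α = y. -/
open Matrix BigOperators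

/-- The ridge Randomized Kaczmarz updates preserve the relation `β = Xᵀα`
and coincide with coordinate descent on the system `(XXᵀ + λI_n)α = y`: with
`δ = (y^i − β·X^i − λα^i)/(‖X^i‖² + λ)`, `α' = α + δ e_i`, `β' = β + δ X^i`, one has
`β' = Xᵀα'` and `α'` is the coordinate descent update of `α` on coordinate `i` for the
positive definite system `(XXᵀ + λI_n)α = y`. -/
theorem ridge_kaczmarz_is_cd {n p : ℕ}
    (X : Matrix (Fin n) (Fin p) ℝ) (y : Fin n → ℝ) (lam : ℝ) (hlam : 0 < lam)
    (i : Fin n)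
    (α : Fin n → ℝ) (β : Fin p → ℝ) (hβ : β = Xᵀ.mulVec α)
    (δ : ℝ) (hδ : δ = (y i - (∑ k, β k * X i k) - lam * α i) / ((∑ k, (X i k) ^ 2) + lam))
    (α' : Fin n → ℝ) (hα' : α' = α + δ • (Pi.single i 1 : Fin n → ℝ))
    (β' : Fin p → ℝ) (hβ' : β' = β + δ • X i) :
    β' = Xᵀ.mulVec α' ∧
    α' = α + ((y i - (X * Xᵀ + lam • (1 : Matrix (Fin n) (Fin n) ℝ)).mulVec α i) /
        (X * Xᵀ + lam • (1 : Matrix (Fin n) (Fin n) ℝ)) i i) •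
      (Pi.single i 1 : Fin n → ℝ) := by
  have hsingle : Xᵀ.mulVec (Pi.single i 1 : Fin n → ℝ) = X i := by
    funext j
    simp [Matrix.mulVec, dotProduct, Pi.single_apply, Finset.sum_ite_eq', Matrix.transpose_apply]
  have hdiag : (X * Xᵀ + lam • (1 : Matrix (Fin n) (Fin n) ℝ)) i i
      = (∑ k, (X i k) ^ 2) + lam := by
    simp [Matrix.add_apply, Matrix.mul_apply, Matrix.one_apply, sq]
  have hXX : (X * Xᵀ + lam • (1 : Matrix (Fin n) (Fin n) ℝ)).mulVec α i
      = (∑ k, (Xᵀ.mulVec α) k * X i k) + lam * α i := by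
    rw [Matrix.add_mulVec, Matrix.smul_mulVec, Matrix.one_mulVec]
    simp only [Pi.add_apply, Pi.smul_apply, smul_eq_mul]
    congr 1
    simp only [Matrix.mulVec, dotProduct, Matrix.mul_apply, Matrix.transpose_apply,
      Finset.sum_mul]
    rw [Finset.sum_comm]
    exact Finset.sum_congr rfl fun j _ => Finset.sum_congr rfl fun k _ => by ring
  constructor
  · rw [hβ', hα', hβ, Matrix.mulVec_add, Matrix.mulVec_smul, hsingle]
  · rw [hα']
    congr 1
    rw [hδ, hXX, hdiag, hβ]
    ring
end

section
/- Let K be a real symmetric positive semidefinite n×n matrix, λ > 0, y ∈ ℝ^n, and α* = (K + λI_n)⁻¹y. Define the kernel Kaczmarz update on coordinate i by KK_i(α) = α + ((y_i − (Kα)_i − λα_i)/(K_ii + λ)) e_i. Fix α_0 ∈ ℝ^n and t ≥ 0; for ω ∈ {1,…,n}^t let α_t(ω) be the result of applying KK_{ω_1}, …, KK_{ω_t} starting from α_0, and let P(ω) = ∏_{k=1}^t (K_{ω_k ω_k} + λ)/Tr(K + λI_n). Then Σ_ω P(ω) ‖α_t(ω) − α*‖²_{K+λI_n} ≤ (1 −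 λ_min(K + λI_n)/Tr(K + λI_n))^t ‖α_0 − α*‖²_{K+λI_n}; i.e., the Kaczmarz-style algorithm for kernel ridge regression converges linearly in expectation. -/
open Matrix BigOperators

/-- The kernel Kaczmarz update on coordinate `i`:
`KK_i(α) = α + ((y_i − (Kα)_i − λα_i)/(K_ii + λ)) e_i`. -/
noncomputable def KK {m : ℕ} (K : Matrix (Fin m) (Fin m) ℝ) (lam : ℝ) (y : Fin m → ℝ)
    (i : Fin m) (α : Fin m → ℝ) : Fin m → ℝ :=
  α + ((y i - K.mulVec α i - lam * α i) / (K i i + lam)) • (Pi.single i 1 : Fin m → ℝ)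

/-- The result of applying kernel Kaczmarz updates `KK_{ω 1}, …, KK_{ω t}`,
starting from `α0`. -/
noncomputable def iterKK {m : ℕ} (K : Matrix (Fin m) (Fin m) ℝ) (lam : ℝ) (y : Fin m → ℝ)
    (α0 : Fin m → ℝ) (t : ℕ) (ω : Fin t → Fin m) : Fin m → ℝ :=
  (List.ofFn ω).foldl (fun α i => KK K lam y i α) α0

private lemma rayleigh_aux {m : ℕ} (A : Matrix (Fin m) (Fin m) ℝ) (hA : A.IsHermitian)
    (v : Fin m → ℝ) :
    (⨅ i, hA.eigenvalues i) * (v ⬝ᵥ v) ≤ v ⬝ᵥ A.mulVec v := by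
  rcases Nat.eq_zero_or_pos m with hm | hm
  · subst hm
    simp [dotProduct]
  have hstar : (hA.eigenvectorUnitary : Matrix (Fin m) (Fin m) ℝ)ᵀ
      = star (hA.eigenvectorUnitary : Matrix (Fin m) (Fin m) ℝ) := by
    ext i j; simp [Matrix.star_apply, Matrix.transpose_apply]
  set U := (hA.eigenvectorUnitary : Matrix (Fin m) (Fin m) ℝ) with hU
  have hUU : U * star U = 1 := (Unitary.mem_iff.mp hA.eigenvectorUnitary.2).2
  set w := star U *ᵥ v with hw
  have hdot : ∀ (M : Matrix (Fin m) (Fin m) ℝ) (a b : Fin m → ℝ),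
      (M *ᵥ a) ⬝ᵥ b = a ⬝ᵥ (Mᵀ *ᵥ b) := fun M a b => by
    rw [Matrix.dotProduct_mulVec, Matrix.vecMul_transpose]
  have hstar' : (star U)ᵀ = U := by rw [← hstar, Matrix.transpose_transpose]
  have hvv : v ⬝ᵥ v = w ⬝ᵥ w := by
    rw [hw, hdot, hstar', Matrix.mulVec_mulVec, hUU, Matrix.one_mulVec]
  have hAv : v ⬝ᵥ A.mulVec v = w ⬝ᵥ ((Matrix.diagonal hA.eigenvalues) *ᵥ w) := by
    conv_lhs => rw [hA.spectral_theorem, Unitary.conjStarAlgAut_apply]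
    rw [← Matrix.mulVec_mulVec, ← Matrix.mulVec_mulVec,
      Matrix.dotProduct_mulVec, ← Matrix.mulVec_transpose, hstar, ← hw,
      RCLike.ofReal_real_eq_id, Function.id_comp]
  rw [hvv, hAv]
  have hdiag : w ⬝ᵥ ((Matrix.diagonal hA.eigenvalues) *ᵥ w)
      = ∑ i, hA.eigenvalues i * (w i * w i) := by
    simp [dotProduct, Matrix.mulVec_diagonal, mul_comm, mul_assoc, mul_left_comm]
  rw [hdiag, dotProduct, Finset.mul_sum]
  refine Finset.sum_le_sum fun i _ => ?_
  exact mul_le_mul_of_nonneg_right (ciInf_le (Finite.bddBelow_range _) i) (mul_self_nonneg _)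

open scoped MatrixOrder in
/-- `λmin * ‖e‖²_A ≤ ‖A e‖²` for `A` symmetric psd. -/
private lemma sq_norm_ge {m : ℕ} (A : Matrix (Fin m) (Fin m) ℝ) (hA : A.PosSemidef)
    (hh : A.IsHermitian) (e : Fin m → ℝ) :
    (⨅ i, hh.eigenvalues i) * (e ⬝ᵥ A.mulVec e) ≤ (A *ᵥ e) ⬝ᵥ (A *ᵥ e) := by
  have hdot : ∀ (M : Matrix (Fin m) (Fin m) ℝ) (a b : Fin m → ℝ),
      (M *ᵥ a) ⬝ᵥ b = a ⬝ᵥ (Mᵀ *ᵥ b) := fun M a b => by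
    rw [Matrix.dotProduct_mulVec, Matrix.vecMul_transpose]
  set S := CFC.sqrt A with hS
  have hSS : S * S = A := CFC.sqrt_mul_sqrt_self A hA.nonneg
  have hSt : Sᵀ = S := by
    have h := (CFC.sqrt_nonneg A).posSemidef.1
    ext i j
    have := congrFun (congrFun h i) j
    simpa [Matrix.conjTranspose_apply] using this
  set w := S *ᵥ e with hw
  have h1 : e ⬝ᵥ A.mulVec e = w ⬝ᵥ w := by
    rw [hw, hdot, hSt, Matrix.mulVec_mulVec, hSS]
  have h2 : (A *ᵥ e) ⬝ᵥ (A *ᵥ e) = w ⬝ᵥ A.mulVec w := by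
    have hAe : A *ᵥ e = S *ᵥ w := by rw [hw, Matrix.mulVec_mulVec, hSS]
    rw [hAe, hdot, hSt, Matrix.mulVec_mulVec, hSS]
  rw [h1, h2]
  exact rayleigh_aux A hh w

private lemma diag_pos {m : ℕ} (H : Matrix (Fin m) (Fin m) ℝ) (hpd : H.PosDef)
    (i : Fin m) : 0 < H i i := by
  exact hpd.diag_pos

private lemma trace_pos {m : ℕ} (H : Matrix (Fin m) (Fin m) ℝ) (hpd : H.PosDef) (hm : 0 < m) : 0 < H.trace := by
  haveI : Nonempty (Fin m) := ⟨⟨0, hm⟩⟩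
  exact Finset.sum_pos (fun i _ => diag_pos H hpd i) Finset.univ_nonempty

/-- single-step energy identity -/
private lemma step_eq {m : ℕ} (H : Matrix (Fin m) (Fin m) ℝ) (hpd : H.PosDef) (hh : H.IsHermitian) (e : Fin m → ℝ) (i : Fin m) :
    (e - ((H *ᵥ e) i / H i i) • (Pi.single i 1 : Fin m → ℝ)) ⬝ᵥ
      H *ᵥ (e - ((H *ᵥ e) i / H i i) • (Pi.single i 1 : Fin m → ℝ))
    = e ⬝ᵥ H *ᵥ e - ((H *ᵥ e) i) ^ 2 / H i i := by
  have hii : H i i ≠ 0 := (diag_pos H hpd i).ne'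
  have h1 : (Pi.single i 1 : Fin m → ℝ) ⬝ᵥ (H *ᵥ e) = (H *ᵥ e) i := by
    rw [single_dotProduct, one_mul]
  have h2 : e ⬝ᵥ (H *ᵥ (Pi.single i 1 : Fin m → ℝ)) = (H *ᵥ e) i := by
    rw [Matrix.dotProduct_mulVec, ← Matrix.mulVec_transpose]
    have : Hᵀ = H := by
      ext a b
      have := congrFun (congrFun hh a) b
      simpa [Matrix.conjTranspose_apply] using this
    rw [this, dotProduct_single, mul_one]
  have h3 : (Pi.single i 1 : Fin m → ℝ) ⬝ᵥ (H *ᵥ (Pi.single i 1 : Fin m → ℝ)) = H i i := by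
    simp [single_dotProduct, Matrix.mulVec_single]
  rw [Matrix.mulVec_sub, Matrix.mulVec_smul, sub_dotProduct, dotProduct_sub,
    dotProduct_sub, smul_dotProduct, dotProduct_smul,
    dotProduct_smul, smul_dotProduct]
  simp only [smul_eq_mul, h1, h2, h3]
  field_simp
  ring

/-- expected one-step contraction -/
private lemma step_sum {m : ℕ} (H : Matrix (Fin m) (Fin m) ℝ) (hpd : H.PosDef) (hm : 0 < m) (hh : H.IsHermitian) (e : Fin m → ℝ) :
    ∑ i, (H i i / H.trace) *
        ((e - ((H *ᵥ e) i / H i i) • (Pi.single i 1 : Fin m → ℝ)) ⬝ᵥ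
          H *ᵥ (e - ((H *ᵥ e) i / H i i) • (Pi.single i 1 : Fin m → ℝ)))
      ≤ (1 - (⨅ i, hh.eigenvalues i) / H.trace) * (e ⬝ᵥ H *ᵥ e) := by
  have htr : 0 < H.trace := trace_pos H hpd hm
  have hsum : ∑ i, (H i i / H.trace) *
      ((e - ((H *ᵥ e) i / H i i) • (Pi.single i 1 : Fin m → ℝ)) ⬝ᵥ
        H *ᵥ (e - ((H *ᵥ e) i / H i i) • (Pi.single i 1 : Fin m → ℝ)))
      = e ⬝ᵥ H *ᵥ e - (∑ i, ((H *ᵥ e) i) ^ 2) / H.trace := by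
    have : ∀ i : Fin m, (H i i / H.trace) *
        ((e - ((H *ᵥ e) i / H i i) • (Pi.single i 1 : Fin m → ℝ)) ⬝ᵥ
          H *ᵥ (e - ((H *ᵥ e) i / H i i) • (Pi.single i 1 : Fin m → ℝ)))
        = (H i i * (e ⬝ᵥ H *ᵥ e)) / H.trace - ((H *ᵥ e) i) ^ 2 / H.trace := by
      intro i
      rw [step_eq H hpd hh e i]
      have hii : H i i ≠ 0 := (diag_pos H hpd i).ne'
      field_simp
    rw [Finset.sum_congr rfl fun i _ => this i, Finset.sum_sub_distrib,
      ← Finset.sum_div, ← Finset.sum_div, ← Finset.sum_mul]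
    have htr' : ∑ i, H i i = H.trace := rfl
    rw [htr', mul_comm, mul_div_assoc, div_self htr.ne', mul_one]
  rw [hsum, sub_mul, one_mul, div_mul_eq_mul_div]
  have key : (⨅ i, hh.eigenvalues i) * (e ⬝ᵥ H *ᵥ e) ≤ ∑ i, ((H *ᵥ e) i) ^ 2 := by
    have h := sq_norm_ge H hpd.posSemidef hh e
    have : (H *ᵥ e) ⬝ᵥ (H *ᵥ e) = ∑ i, ((H *ᵥ e) i) ^ 2 := by
      simp [dotProduct, sq]
    linarith [h, this ▸ h]
  have hdiv : (⨅ i, hh.eigenvalues i) * (e ⬝ᵥ H *ᵥ e) / H.trace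
      ≤ (∑ i, ((H *ᵥ e) i) ^ 2) / H.trace := by
    gcongr
  linarith

/-- For a symmetric positive semidefinite kernel matrix `K`, `λ > 0` and
`α* = (K + λI_n)⁻¹y`, the kernel Kaczmarz iteration converges linearly in expectation in
the `(K + λI_n)`-norm:
`E‖α_t − α*‖²_{K+λI} ≤ (1 − λ_min(K + λI)/Tr(K + λI))^t ‖α_0 − α*‖²_{K+λI}`, where the
expectation is over index sequences `ω` with probability
`P(ω) = ∏_k (K_{ω_k ω_k} + λ)/Tr(K + λI_n)`. -/
theorem kernel_kaczmarz_linear_convergence {m : ℕ}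
    (K : Matrix (Fin m) (Fin m) ℝ) (hK : K.PosSemidef)
    (lam : ℝ) (hlam : 0 < lam) (y : Fin m → ℝ)
    (hH : (K + lam • (1 : Matrix (Fin m) (Fin m) ℝ)).IsHermitian)
    (αstar : Fin m → ℝ)
    (hαstar : αstar = (K + lam • (1 : Matrix (Fin m) (Fin m) ℝ))⁻¹.mulVec y)
    (α0 : Fin m → ℝ) (t : ℕ) :
    ∑ ω : Fin t → Fin m,
        (∏ k, (K (ω k) (ω k) + lam) / (K + lam • (1 : Matrix (Fin m) (Fin m) ℝ)).trace) *
          ((iterKK K lam y α0 t ω - αstar) ⬝ᵥ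
            (K + lam • (1 : Matrix (Fin m) (Fin m) ℝ)).mulVec (iterKK K lam y α0 t ω - αstar))
      ≤ (1 - (⨅ i, hH.eigenvalues i) /
            (K + lam • (1 : Matrix (Fin m) (Fin m) ℝ)).trace) ^ t *
        ((α0 - αstar) ⬝ᵥ (K + lam • (1 : Matrix (Fin m) (Fin m) ℝ)).mulVec (α0 - αstar)) := by
  rcases Nat.eq_zero_or_pos m with hm | hm
  · subst hm
    simp [dotProduct]
  have hsm : (lam • (1 : Matrix (Fin m) (Fin m) ℝ)).PosDef := by
    rw [Matrix.smul_one_eq_diagonal]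
    exact Matrix.posDef_diagonal_iff.mpr fun _ => hlam
  have hpd : (K + lam • (1 : Matrix (Fin m) (Fin m) ℝ)).PosDef :=
    Matrix.PosDef.posSemidef_add hK hsm
  have htr : 0 < (K + lam • (1 : Matrix (Fin m) (Fin m) ℝ)).trace :=
    trace_pos _ hpd hm
  have hy : (K + lam • (1 : Matrix (Fin m) (Fin m) ℝ)) *ᵥ αstar = y := by
    rw [hαstar, Matrix.mulVec_mulVec, Matrix.mul_nonsing_inv _ hpd.det_pos.ne'.isUnit,
      Matrix.one_mulVec]
  have hKii : ∀ i, K i i + lam = (K + lam • (1 : Matrix (Fin m) (Fin m) ℝ)) i i := fun i => by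
    simp [Matrix.add_apply, Matrix.smul_apply, Matrix.one_apply_eq]
  have hKKe : ∀ (i : Fin m) (α : Fin m → ℝ), KK K lam y i α - αstar
      = (α - αstar) - (((K + lam • (1 : Matrix (Fin m) (Fin m) ℝ)) *ᵥ (α - αstar)) i /
          (K + lam • (1 : Matrix (Fin m) (Fin m) ℝ)) i i) • (Pi.single i 1 : Fin m → ℝ) := by
    intro i α
    have h2 : ((K + lam • (1 : Matrix (Fin m) (Fin m) ℝ)) *ᵥ α) i
        = K.mulVec α i + lam * α i := by
      simp [Matrix.add_mulVec, Matrix.smul_mulVec, Matrix.one_mulVec]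
    have hnum : y i - K.mulVec α i - lam * α i
        = -(((K + lam • (1 : Matrix (Fin m) (Fin m) ℝ)) *ᵥ (α - αstar)) i) := by
      rw [Matrix.mulVec_sub, hy]
      simp only [Pi.sub_apply, h2]
      ring
    unfold KK
    rw [hKii, hnum, neg_div, neg_smul]
    abel
  have hρ : 0 ≤ 1 - (⨅ i, hH.eigenvalues i) /
      (K + lam • (1 : Matrix (Fin m) (Fin m) ℝ)).trace := by
    have h1 := rayleigh_aux _ hH (Pi.single (⟨0, hm⟩ : Fin m) 1 : Fin m → ℝ)
    have h2 : (Pi.single (⟨0, hm⟩ : Fin m) 1 : Fin m → ℝ) ⬝ᵥ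
        (Pi.single (⟨0, hm⟩ : Fin m) 1 : Fin m → ℝ) = 1 := by
      simp [single_dotProduct]
    have h3 : (Pi.single (⟨0, hm⟩ : Fin m) 1 : Fin m → ℝ) ⬝ᵥ
        (K + lam • (1 : Matrix (Fin m) (Fin m) ℝ)) *ᵥ
          (Pi.single (⟨0, hm⟩ : Fin m) 1 : Fin m → ℝ)
        = (K + lam • (1 : Matrix (Fin m) (Fin m) ℝ)) ⟨0, hm⟩ ⟨0, hm⟩ := by
      simp [single_dotProduct, Matrix.mulVec_single]
    have h4 : (K + lam • (1 : Matrix (Fin m) (Fin m) ℝ)) ⟨0, hm⟩ ⟨0, hm⟩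
        ≤ (K + lam • (1 : Matrix (Fin m) (Fin m) ℝ)).trace :=
      Finset.single_le_sum (fun i _ => (diag_pos _ hpd i).le) (Finset.mem_univ _)
    rw [h2, h3, mul_one] at h1
    have h5 : (⨅ i, hH.eigenvalues i) / (K + lam • (1 : Matrix (Fin m) (Fin m) ℝ)).trace
        ≤ 1 := by
      rw [div_le_one htr]
      linarith
    linarith
  induction t generalizing α0 with
  | zero => simp [iterKK]
  | succ t ih =>
    rw [← (Fin.consEquiv (fun _ : Fin (t + 1) => Fin m)).sum_comp, Fintype.sum_prod_type]
    have hiter : ∀ (i : Fin m) (ω' : Fin t → Fin m),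
        iterKK K lam y α0 (t + 1) ((Fin.consEquiv fun _ => Fin m) (i, ω'))
          = iterKK K lam y (KK K lam y i α0) t ω' := by
      intro i ω'
      show iterKK K lam y α0 (t + 1) (Fin.cons i ω') = _
      simp [iterKK, List.ofFn_succ]
    simp only [Fin.consEquiv_apply, Fin.prod_univ_succ, Fin.cons_zero, Fin.cons_succ, hiter]
    simp only [mul_assoc, ← Finset.mul_sum]
    refine le_trans (Finset.sum_le_sum fun i _ =>
      mul_le_mul_of_nonneg_left (ih (KK K lam y i α0)) ?_) ?_
    · rw [hKii]
      exact div_nonneg (diag_pos _ hpd i).le htr.le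
    have hstep := step_sum _ hpd hm hH (α0 - αstar)
    have h7 := mul_le_mul_of_nonneg_left hstep
      (pow_nonneg hρ t : (0:ℝ) ≤ (1 - (⨅ i, hH.eigenvalues i) /
        (K + lam • (1 : Matrix (Fin m) (Fin m) ℝ)).trace) ^ t)
    rw [Finset.mul_sum] at h7
    simp only [hKKe, hKii]
    refine le_trans (le_of_eq (Finset.sum_congr rfl fun i _ => by ring)) (h7.trans ?_)
    exact le_of_eq (by ring)
end
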